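/- arXiv:math/9407201 — 10 statements merged into one kernel-verified Lean document; each statement's English description precedes it below -/
import Mathlib

section
/- Let 0 < m < 1/2 and define t(v) = 2m²v / (1 + 2m(m-1)v + √(1 + 4m(m-1)v)) for 0 < v ≤ 1/(4m(1-m)). Then t is strictly increasing in v on this interval. -/
theorem stmt1 (m : ℝ) (h0 : 0 < m) (h1 : m < 1/2) :
    StrictMonoOn
      (fun v : ℝ => 2 * m ^ 2 * v / (1 + 2 * m * (m - 1) * v + Real.sqrt (1 + 4 * m * (m - 1) * v)))
      (Set.Ioc (0 : ℝ) (1 / (4 * m * (1 - m)))) := by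
  have hm1 : m < 1 := by linarith
  have h4 : (0:ℝ) < 4 * m * (1 - m) := by nlinarith
  intro a ha b hb hab
  obtain ⟨ha0, haU⟩ := ha
  obtain ⟨hb0, hbU⟩ := hb
  have key : ∀ v : ℝ, 0 < v → v ≤ 1/(4*m*(1-m)) →
      2 * m ^ 2 * v / (1 + 2 * m * (m - 1) * v + Real.sqrt (1 + 4 * m * (m - 1) * v))
        = m * (1 - Real.sqrt (1 + 4*m*(m-1)*v)) / ((1-m) * (1 + Real.sqrt (1 + 4*m*(m-1)*v)))
      ∧ Real.sqrt (1 + 4*m*(m-1)*v) < 1 := by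
    intro v hv hvU
    set s := Real.sqrt (1 + 4*m*(m-1)*v) with hs
    have harg : 0 ≤ 1 + 4*m*(m-1)*v := by
      rw [le_div_iff₀ h4] at hvU
      nlinarith
    have hs2 : s^2 = 1 + 4*m*(m-1)*v := Real.sq_sqrt harg
    have hs0 : 0 ≤ s := Real.sqrt_nonneg _
    have hslt : s < 1 := by
      rw [hs, show Real.sqrt (1 + 4*m*(m-1)*v) < 1 ↔ 1 + 4*m*(m-1)*v < 1^2 from
        Real.sqrt_lt' one_pos]
      nlinarith
    refine ⟨?_, hslt⟩
    have hden : 1 + 2*m*(m-1)*v + s = (1+s)^2/2 := by nlinarith [hs2]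
    have hd2 : (0:ℝ) < (1-m) * (1+s) := mul_pos (by linarith) (by positivity)
    rw [hden, div_eq_div_iff (show ((1+s)^2/2 : ℝ) ≠ 0 by positivity) hd2.ne']
    linear_combination (m*(1+s)/2) * hs2
  obtain ⟨hfa, hsa1⟩ := key a ha0 haU
  obtain ⟨hfb, hsb1⟩ := key b hb0 hbU
  have hsa0 : 0 ≤ Real.sqrt (1 + 4*m*(m-1)*a) := Real.sqrt_nonneg _
  have hsb0 : 0 ≤ Real.sqrt (1 + 4*m*(m-1)*b) := Real.sqrt_nonneg _
  have hargb : 0 ≤ 1 + 4*m*(m-1)*b := by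
    rw [le_div_iff₀ h4] at hbU; nlinarith
  have hlt : Real.sqrt (1 + 4*m*(m-1)*b) < Real.sqrt (1 + 4*m*(m-1)*a) := by
    apply Real.sqrt_lt_sqrt hargb
    nlinarith
  simp only [hfa, hfb]
  set sa := Real.sqrt (1 + 4*m*(m-1)*a)
  set sb := Real.sqrt (1 + 4*m*(m-1)*b)
  have hda : (0:ℝ) < (1-m) * (1+sa) := mul_pos (by linarith) (by positivity)
  have hdb : (0:ℝ) < (1-m) * (1+sb) := mul_pos (by linarith) (by positivity)
  rw [div_lt_div_iff₀ hda hdb]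
  nlinarith [mul_pos (mul_pos h0 (by linarith : (0:ℝ) < 1 - m)) (sub_pos.mpr hlt)]
end

section
/- Let 0 < m < 1/2 and 0 < v ≤ 1/(4m(1-m)). Then t = 2m²v / (1 + 2m(m-1)v + √(1 + 4m(m-1)v)) satisfies 0 < t ≤ m/(1-m) < 1. -/
theorem stmt2 (m v t : ℝ) (h0 : 0 < m) (h1 : m < 1/2)
    (hv0 : 0 < v) (hv1 : v ≤ 1 / (4 * m * (1 - m)))
    (ht : t = 2 * m ^ 2 * v / (1 + 2 * m * (m - 1) * v + Real.sqrt (1 + 4 * m * (m - 1) * v))) :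
    0 < t ∧ t ≤ m / (1 - m) ∧ m / (1 - m) < 1 := by
  have hm1 : 0 < 1 - m := by linarith
  have hpos : 0 < 4 * m * (1 - m) := by positivity
  have ha1 : 4 * m * (1 - m) * v ≤ 1 := by
    have := (le_div_iff₀ hpos).mp hv1
    linarith
  have hnn : 0 ≤ 1 + 4 * m * (m - 1) * v := by nlinarith
  set s := Real.sqrt (1 + 4 * m * (m - 1) * v) with hs
  have hs0 : 0 ≤ s := Real.sqrt_nonneg _
  have hs2 : s ^ 2 = 1 + 4 * m * (m - 1) * v := Real.sq_sqrt hnn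
  have hD : 1 + 2 * m * (m - 1) * v + s = (1 + s) ^ 2 / 2 := by nlinarith
  have h1s : 0 < 1 + s := by linarith
  have hDpos : 0 < 1 + 2 * m * (m - 1) * v + s := by
    rw [hD]; positivity
  have htpos : 0 < t := by
    rw [ht]; positivity
  refine ⟨htpos, ?_, ?_⟩
  · rw [ht, hD, div_le_div_iff₀ (by positivity) hm1]
    nlinarith [sq_nonneg (1 + s), mul_pos h0 hm1]
  · rw [div_lt_one hm1]; linarith
end

section
/- Let 0 < m < 1/2, 0 < b < 1, and 0 < t < 1. Then the equation x^{2m} - t·x^{2m-2} - (1-t)·b^{2m} = 0 has exactly one solution x in the open interval (0,1). -/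
theorem stmt3 (m b t : ℝ) (hm0 : 0 < m) (hm1 : m < 1/2)
    (hb0 : 0 < b) (hb1 : b < 1) (ht0 : 0 < t) (ht1 : t < 1) :
    ∃! x : ℝ, x ∈ Set.Ioo (0 : ℝ) 1 ∧
      x ^ (2 * m) - t * x ^ (2 * m - 2) - (1 - t) * b ^ (2 * m) = 0 := by
  set f : ℝ → ℝ := fun x => x ^ (2 * m) - t * x ^ (2 * m - 2) - (1 - t) * b ^ (2 * m)
    with hf
  have hmono : StrictMonoOn f (Set.Ioi (0:ℝ)) := by
    intro x hx y hy hxy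
    have h1 : x ^ (2 * m) < y ^ (2 * m) :=
      Real.rpow_lt_rpow (le_of_lt hx) hxy (by linarith)
    have h2 : y ^ (2 * m - 2) < x ^ (2 * m - 2) :=
      Real.rpow_lt_rpow_of_neg hx hxy (by linarith)
    have h3 : t * y ^ (2 * m - 2) < t * x ^ (2 * m - 2) :=
      mul_lt_mul_of_pos_left h2 ht0
    simp only [hf]
    linarith
  set x0 : ℝ := min (t / 2) (1 / 2) with hx0def
  have hx0 : 0 < x0 := lt_min (by linarith) (by norm_num)
  have hx01 : x0 < 1 := lt_of_le_of_lt (min_le_right _ _) (by norm_num)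
  have hb2m : 0 < b ^ (2 * m) := Real.rpow_pos_of_pos hb0 _
  have hb2m1 : b ^ (2 * m) < 1 := Real.rpow_lt_one (le_of_lt hb0) hb1 (by linarith)
  have hf1 : 0 < f 1 := by
    simp only [hf, Real.one_rpow]
    nlinarith
  have hfx0 : f x0 < 0 := by
    have hA : x0 ^ (2 * m) < 1 := Real.rpow_lt_one (le_of_lt hx0) hx01 (by linarith)
    have hB : x0 ^ (-1 : ℝ) < x0 ^ (2 * m - 2) :=
      Real.rpow_lt_rpow_of_exponent_gt hx0 hx01 (by linarith)
    rw [Real.rpow_neg_one] at hB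
    have hinv : (2:ℝ) / t ≤ x0⁻¹ := by
      have h1 : x0 ≤ t / 2 := min_le_left _ _
      have h2 : (t / 2)⁻¹ ≤ x0⁻¹ := by
        apply inv_anti₀ hx0 h1
      rwa [inv_div] at h2
    have h2t : (2:ℝ) ≤ t * x0⁻¹ := by
      have := mul_le_mul_of_nonneg_left hinv (le_of_lt ht0)
      calc (2:ℝ) = t * (2 / t) := by field_simp
        _ ≤ t * x0⁻¹ := this
    have h4 : (2:ℝ) < t * x0 ^ (2 * m - 2) :=
      lt_of_le_of_lt h2t (mul_lt_mul_of_pos_left hB ht0)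
    simp only [hf]
    nlinarith
  have hc : ContinuousOn f (Set.Icc x0 1) := by
    intro x hx
    have hxp : 0 < x := lt_of_lt_of_le hx0 hx.1
    apply ContinuousAt.continuousWithinAt
    have c1 : ContinuousAt (fun x : ℝ => x ^ (2 * m)) x :=
      Real.continuousAt_rpow_const x _ (Or.inl (ne_of_gt hxp))
    have c2 : ContinuousAt (fun x : ℝ => x ^ (2 * m - 2)) x :=
      Real.continuousAt_rpow_const x _ (Or.inl (ne_of_gt hxp))
    exact (c1.sub ((continuousAt_const).mul c2)).sub continuousAt_const
  have hivt := intermediate_value_Icc (le_of_lt hx01) hc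
  have h0mem : (0:ℝ) ∈ Set.Icc (f x0) (f 1) := ⟨le_of_lt hfx0, le_of_lt hf1⟩
  obtain ⟨c, hcmem, hfc⟩ := hivt h0mem
  have hc0 : 0 < c := lt_of_lt_of_le hx0 hcmem.1
  have hc1 : c < 1 := by
    rcases lt_or_eq_of_le hcmem.2 with h | h
    · exact h
    · exfalso; rw [h] at hfc; linarith
  refine ⟨c, ⟨⟨hc0, hc1⟩, hfc⟩, ?_⟩
  rintro y ⟨⟨hy0, hy1⟩, hfy⟩
  exact hmono.injOn (Set.mem_Ioi.mpr hy0) (Set.mem_Ioi.mpr hc0) (show f y = f c by rw [hfc]; exact hfy)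
end

section
/- Let 0 < m < 1/2, 0 < b < 1, 0 < t < 1, and let x ∈ (0,1) satisfy x^{2m} - t·x^{2m-2} - (1-t)·b^{2m} = 0. Then (1-m)·x^{2m} + m·x^{2m-2} - b^{2m} > 0. -/
theorem stmt5 (m b t x : ℝ) (hm0 : 0 < m) (hm1 : m < 1/2)
    (hb0 : 0 < b) (hb1 : b < 1) (ht0 : 0 < t) (ht1 : t < 1)
    (hx : x ∈ Set.Ioo (0 : ℝ) 1)
    (heq : x ^ (2 * m) - t * x ^ (2 * m - 2) - (1 - t) * b ^ (2 * m) = 0) :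
    (1 - m) * x ^ (2 * m) + m * x ^ (2 * m - 2) - b ^ (2 * m) > 0 := by
  obtain ⟨hx0, hx1⟩ := hx
  have hA : 0 < x ^ (2 * m) := Real.rpow_pos_of_pos hx0 _
  have hBA : x ^ (2 * m) < x ^ (2 * m - 2) := by
    rw [show 2 * m - 2 = 2 * m + (-2) by ring, Real.rpow_add hx0]
    have h1 : (1 : ℝ) < x ^ (-2 : ℝ) :=
      Real.one_lt_rpow_of_pos_of_lt_one_of_neg hx0 hx1 (by norm_num)
    nlinarith
  have key : 0 < (m + t - m * t) * (x ^ (2 * m - 2) - x ^ (2 * m)) := by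
    apply mul_pos (by nlinarith) (by linarith)
  nlinarith [key, heq, ht1]
end

section
/- The complex ellipsoid E(p) = {z ∈ ℂⁿ : |z₁|^{2p₁} + ... + |zₙ|^{2pₙ} < 1}, with all pⱼ > 0, is a convex set if and only if pⱼ ≥ 1/2 for every j. -/
open Finset Real

theorem stmt7 (n : ℕ) (hn : 1 < n) (p : Fin n → ℝ) (hp : ∀ j, 0 < p j) :
    Convex ℝ {z : Fin n → ℂ | ∑ j, ‖z j‖ ^ (2 * p j) < 1} ↔
      ∀ j, 1/2 ≤ p j := by
  constructor
  · intro hconv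
    by_contra hcon
    push_neg at hcon
    obtain ⟨j, hj⟩ := hcon
    -- pick another index k ≠ j
    have h0n : 0 < n := by omega
    set k : Fin n := if j = ⟨0, h0n⟩ then ⟨1, hn⟩ else ⟨0, h0n⟩ with hk
    have hjk : j ≠ k := by
      rcases eq_or_ne j ⟨0, h0n⟩ with h | h
      · simp [hk, h]
      · simp [hk, h]
    set q : ℝ := 2 * p j with hqdef
    set r : ℝ := 2 * p k with hrdef
    have hq0 : 0 < q := by rw [hqdef]; linarith [hp j]
    have hq1 : q < 1 := by simp only [hqdef]; linarith
    have hr0 : 0 < r := by rw [hrdef]; linarith [hp k]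
    set R : ℝ := max r 1 with hR
    have hR1 : 1 ≤ R := le_max_right _ _
    have hR0 : 0 < R := by linarith
    set ε : ℝ := (2 * R) ^ (-(1 - q)⁻¹) with hε
    have hε0 : 0 < ε := Real.rpow_pos_of_pos (by linarith) _
    set t : ℝ := min ε (1/2) with ht
    have ht0 : 0 < t := lt_min hε0 (by norm_num)
    have ht2 : t ≤ 1/2 := min_le_right _ _
    have htε : t ≤ ε := min_le_left _ _
    set c : ℝ := 1 / (1 + t) with hc
    have hc0 : 0 < c := by positivity
    have hc1 : c < 1 := by
      rw [hc, div_lt_one (by linarith)]; linarith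
    -- key: 1 - (1-t)*c = 2*t*c
    have hkey : 1 - (1 - t) * c = 2 * t * c := by
      rw [hc]; field_simp; ring
    have htc0 : 0 < t * c := by positivity
    have htc1 : t * c < 1 := by nlinarith
    have h1tc : 0 < (1 - t) * c := by nlinarith
    have h1tc1 : (1 - t) * c < 1 := by nlinarith
    -- ((1-t)*c)^r ≥ 1 - R*(1 - (1-t)*c)
    have hbern : 1 - R * (2 * t * c) ≤ ((1 - t) * c) ^ r := by
      rw [← hkey]
      rcases le_total 1 r with h | h
      · have := one_add_mul_self_le_rpow_one_add
          (s := (1 - t) * c - 1) (by linarith) h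
        have hRr : R = r := max_eq_left h
        rw [hRr]
        calc 1 - r * (1 - (1 - t) * c) = 1 + r * ((1 - t) * c - 1) := by ring
          _ ≤ (1 + ((1 - t) * c - 1)) ^ r := this
          _ = ((1 - t) * c) ^ r := by ring_nf
      · have hRr : R = 1 := max_eq_right h
        have : ((1 - t) * c) ^ (1:ℝ) ≤ ((1 - t) * c) ^ r :=
          Real.rpow_le_rpow_of_exponent_ge h1tc (le_of_lt h1tc1) h
        rw [Real.rpow_one] at this
        rw [hRr]; linarith
    -- (t*c)^q ≥ 2*R*(t*c)
    have hcusp : 2 * R * (t * c) ≤ (t * c) ^ q := by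
      have htcε : t * c ≤ ε := by nlinarith
      have h1 : ε ^ (q - 1) ≤ (t * c) ^ (q - 1) :=
        Real.rpow_le_rpow_of_nonpos htc0 htcε (by linarith)
      have h2 : ε ^ (q - 1) = 2 * R := by
        rw [hε, ← Real.rpow_mul (by linarith : (0:ℝ) ≤ 2 * R),
          show -(1 - q)⁻¹ * (q - 1) = (1 - q)⁻¹ * (1 - q) by ring,
          inv_mul_cancel₀ (by linarith), Real.rpow_one]
      have h3 : (t * c) ^ (q - 1) * (t * c) = (t * c) ^ q := by
        rw [← Real.rpow_add_one (ne_of_gt htc0)]; ring_nf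
      calc 2 * R * (t * c) = ε ^ (q - 1) * (t * c) := by rw [h2]
        _ ≤ (t * c) ^ (q - 1) * (t * c) := by
            exact mul_le_mul_of_nonneg_right h1 (le_of_lt htc0)
        _ = (t * c) ^ q := h3
    -- the three points
    set zA : Fin n → ℂ := fun l => if l = k then (c : ℂ) else 0 with hzA
    set zB : Fin n → ℂ := fun l => if l = j then (c : ℂ) else 0 with hzB
    have habs : ‖((c : ℝ) : ℂ)‖ = c := by
      rw [Complex.norm_real, Real.norm_eq_abs, abs_of_pos hc0]
    have hA : zA ∈ {z : Fin n → ℂ | ∑ l, ‖z l‖ ^ (2 * p l) < 1} := by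
      show ∑ l, ‖zA l‖ ^ (2 * p l) < 1
      rw [Finset.sum_eq_single k]
      · simp only [hzA, if_pos rfl, habs]
        exact Real.rpow_lt_one (le_of_lt hc0) hc1 hr0
      · intro b _ hb
        simp only [hzA, if_neg hb, norm_zero]
        exact Real.zero_rpow (by have := hp b; positivity)
      · intro h; exact absurd (Finset.mem_univ k) h
    have hB : zB ∈ {z : Fin n → ℂ | ∑ l, ‖z l‖ ^ (2 * p l) < 1} := by
      show ∑ l, ‖zB l‖ ^ (2 * p l) < 1
      rw [Finset.sum_eq_single j]
      · simp only [hzB, if_pos rfl, habs]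
        exact Real.rpow_lt_one (le_of_lt hc0) hc1 hq0
      · intro b _ hb
        simp only [hzB, if_neg hb, norm_zero]
        exact Real.zero_rpow (by have := hp b; positivity)
      · intro h; exact absurd (Finset.mem_univ j) h
    have hP := hconv hA hB (a := 1 - t) (b := t) (by linarith) (le_of_lt ht0)
      (by ring)
    simp only [Set.mem_setOf_eq] at hP
    -- compute the sum at the combination point
    have hPval : ∑ l, ‖((1 - t) • zA + t • zB) l‖ ^ (2 * p l)
        = (t * c) ^ q + ((1 - t) * c) ^ r := by
      rw [Finset.sum_eq_add_of_mem j k (Finset.mem_univ j) (Finset.mem_univ k) hjk]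
      · congr 1
        · have : ((1 - t) • zA + t • zB) j = ((t * c : ℝ) : ℂ) := by
            simp [hzA, hzB, if_neg hjk, Complex.real_smul, Complex.ofReal_mul]
          rw [this, Complex.norm_real, Real.norm_eq_abs, abs_of_pos htc0, hqdef]
        · have : ((1 - t) • zA + t • zB) k = (((1 - t) * c : ℝ) : ℂ) := by
            simp [hzA, hzB, if_neg (Ne.symm hjk), Complex.real_smul, Complex.ofReal_mul]
          rw [this, Complex.norm_real, Real.norm_eq_abs, abs_of_pos h1tc, hrdef]
      · intro l _ hl
        obtain ⟨hlj, hlk⟩ := hl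
        have : ((1 - t) • zA + t • zB) l = 0 := by
          simp [hzA, hzB, if_neg hlj, if_neg hlk]
        rw [this, norm_zero]
        exact Real.zero_rpow (by have := hp l; positivity)
    rw [hPval] at hP
    nlinarith
  · -- all p ≥ 1/2 ⟹ convex
    intro hp2 z hz w hw a b ha hb hab
    simp only [Set.mem_setOf_eq] at hz hw ⊢
    have key : ∀ l : Fin n, ‖(a • z + b • w) l‖ ^ (2 * p l) ≤
        a * ‖z l‖ ^ (2 * p l) + b * ‖w l‖ ^ (2 * p l) := by
      intro l
      have hq1 : 1 ≤ 2 * p l := by have := hp2 l; linarith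
      have htri : ‖(a • z + b • w) l‖ ≤
          a * ‖z l‖ + b * ‖w l‖ := by
        simp only [Pi.add_apply, Pi.smul_apply, Complex.real_smul]
        calc ‖(a : ℂ) * z l + (b : ℂ) * w l‖
            ≤ ‖(a : ℂ) * z l‖ + ‖(b : ℂ) * w l‖ :=
              norm_add_le _ _
          _ = a * ‖z l‖ + b * ‖w l‖ := by
              simp [norm_mul, Complex.norm_real, abs_of_nonneg ha, abs_of_nonneg hb]
      have hconveq := (convexOn_rpow hq1).2 (Set.mem_Ici.mpr (norm_nonneg (z l)))
        (Set.mem_Ici.mpr (norm_nonneg (w l))) ha hb hab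
      simp only [smul_eq_mul] at hconveq
      calc ‖(a • z + b • w) l‖ ^ (2 * p l)
          ≤ (a * ‖z l‖ + b * ‖w l‖) ^ (2 * p l) :=
            Real.rpow_le_rpow (norm_nonneg _) htri (by linarith)
        _ ≤ a * ‖z l‖ ^ (2 * p l) + b * ‖w l‖ ^ (2 * p l) :=
            hconveq
    calc ∑ l, ‖(a • z + b • w) l‖ ^ (2 * p l)
        ≤ ∑ l, (a * ‖z l‖ ^ (2 * p l) +
            b * ‖w l‖ ^ (2 * p l)) := Finset.sum_le_sum fun l _ => key l
      _ = a * (∑ l, ‖z l‖ ^ (2 * p l)) +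
            b * (∑ l, ‖w l‖ ^ (2 * p l)) := by
          rw [Finset.sum_add_distrib, Finset.mul_sum, Finset.mul_sum]
      _ < 1 := by
          rcases ha.eq_or_lt with h | h
          · have hb1 : b = 1 := by linarith
            rw [← h, hb1]; simpa using hw
          · have h1 : a * (∑ l, ‖z l‖ ^ (2 * p l)) < a * 1 :=
              mul_lt_mul_of_pos_left hz h
            have h2 : b * (∑ l, ‖w l‖ ^ (2 * p l)) ≤ b * 1 :=
              mul_le_mul_of_nonneg_left hw.le hb
            nlinarith
end

section
/- For every a in the open unit disk E ⊂ ℂ and every θ ∈ ℝ, the map (z₁,z₂) ↦ ((z₁ - a)/(1 - ā·z₁), e^{iθ}(1-|a|²)^{1/(2m)}·z₂/(1 - ā·z₁)^{1/m}) maps the ellipsoid E(1,m) = {(z₁,z₂) ∈ ℂ² : |z₁|² + |z₂|^{2m} < 1} biholomorphically (in particular, bijectively and holomorphically) onto itself. -/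
open Complex

private lemma keyid (a z : ℂ) : ‖1 - (starRingEnd ℂ) a * z‖ ^ 2 - ‖z - a‖ ^ 2
    = (1 - ‖a‖ ^ 2) * (1 - ‖z‖ ^ 2) := by
  simp only [Complex.sq_norm, Complex.normSq_apply, Complex.sub_re, Complex.sub_im,
    Complex.mul_re, Complex.mul_im, Complex.one_re, Complex.one_im,
    RingHomCompTriple.comp_apply, Complex.conj_re, Complex.conj_im]
  ring

private lemma repos {a z : ℂ} (ha : ‖a‖ < 1) (hz : ‖z‖ < 1) :
    0 < (1 - (starRingEnd ℂ) a * z).re := by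
  have h1 : ‖(starRingEnd ℂ) a * z‖ < 1 := by
    rw [norm_mul, Complex.norm_conj]
    nlinarith [norm_nonneg a, norm_nonneg z]
  have h2 := Complex.re_le_norm ((starRingEnd ℂ) a * z)
  simp only [Complex.sub_re, Complex.one_re]
  linarith

private lemma ne_zero_of_repos {w : ℂ} (h : 0 < w.re) : w ≠ 0 := by
  intro h0; rw [h0] at h; simp at h

private lemma abs_snd (m : ℝ) (hm : 0 < m) (a : ℂ) (ha : ‖a‖ < 1) (θ : ℝ) {z1 : ℂ} (z2 : ℂ)
    (hz1 : ‖z1‖ < 1) :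
    ‖Complex.exp (θ * Complex.I) * (((1 - ‖a‖ ^ 2) ^ (1 / (2 * m)) : ℝ) : ℂ) * z2 /
      (1 - (starRingEnd ℂ) a * z1) ^ ((1 / m : ℂ))‖ ^ (2 * m)
    = (1 - ‖a‖ ^ 2) * ‖z2‖ ^ (2 * m) / ‖1 - (starRingEnd ℂ) a * z1‖ ^ 2 := by
  have hd0 : (1 - (starRingEnd ℂ) a * z1) ≠ 0 := ne_zero_of_repos (repos ha hz1)
  have hD : 0 < ‖1 - (starRingEnd ℂ) a * z1‖ := norm_pos_iff.mpr hd0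
  set D := ‖1 - (starRingEnd ℂ) a * z1‖ with hDdef
  have hA : (0:ℝ) < 1 - ‖a‖ ^ 2 := by nlinarith [norm_nonneg a]
  have hc : (0:ℝ) ≤ (1 - ‖a‖ ^ 2) ^ (1 / (2 * m)) := Real.rpow_nonneg hA.le _
  have hcpow : ‖(1 - (starRingEnd ℂ) a * z1) ^ ((1 / m : ℂ))‖ = D ^ (1 / m : ℝ) := by
    rw [Complex.norm_cpow_of_ne_zero hd0]
    have : (1 / (m:ℂ)) = ((1/m : ℝ) : ℂ) := by push_cast; ring
    rw [this, Complex.ofReal_re, Complex.ofReal_im, mul_zero, Real.exp_zero, div_one]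
  rw [norm_div, norm_mul, norm_mul, Complex.norm_exp_ofReal_mul_I, one_mul, Complex.norm_real,
    Real.norm_of_nonneg hc, hcpow]
  rw [Real.div_rpow (by positivity) (by positivity), Real.mul_rpow hc (norm_nonneg z2),
    ← Real.rpow_natCast D 2, ← Real.rpow_mul hA.le, ← Real.rpow_mul hD.le]
  have h1 : 1 / (2 * m) * (2 * m) = 1 := by field_simp
  have h2 : 1 / m * (2 * m) = (2:ℕ) := by push_cast; field_simp
  rw [h1, h2, Real.rpow_one]

private lemma mem_iff (m : ℝ) (hm : 0 < m) (a : ℂ) (ha : ‖a‖ < 1) (θ : ℝ) {z : ℂ × ℂ}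
    (hz1 : ‖z.1‖ < 1) :
    (‖(z.1 - a) / (1 - (starRingEnd ℂ) a * z.1)‖ ^ 2 +
      ‖Complex.exp (θ * Complex.I) * (((1 - ‖a‖ ^ 2) ^ (1 / (2 * m)) : ℝ) : ℂ) * z.2 /
        (1 - (starRingEnd ℂ) a * z.1) ^ ((1 / m : ℂ))‖ ^ (2 * m) < 1)
    ↔ (‖z.1‖ ^ 2 + ‖z.2‖ ^ (2 * m) < 1) := by
  have hd0 : (1 - (starRingEnd ℂ) a * z.1) ≠ 0 := ne_zero_of_repos (repos ha hz1)
  have hD : 0 < ‖1 - (starRingEnd ℂ) a * z.1‖ := norm_pos_iff.mpr hd0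
  have hA : (0:ℝ) < 1 - ‖a‖ ^ 2 := by nlinarith [norm_nonneg a]
  rw [abs_snd m hm a ha θ z.2 hz1, norm_div, div_pow, ← add_div,
    div_lt_one (by positivity)]
  have key := keyid a z.1
  constructor <;> intro h <;>
    nlinarith [Real.rpow_nonneg (norm_nonneg z.2) (2*m), hA, key]

theorem stmt8 (m : ℝ) (hm : 0 < m) (a : ℂ) (ha : ‖a‖ < 1) (θ : ℝ) :
    Set.BijOn
      (fun z : ℂ × ℂ =>
        ((z.1 - a) / (1 - (starRingEnd ℂ) a * z.1),
         Complex.exp (θ * Complex.I) * (((1 - ‖a‖ ^ 2) ^ (1 / (2 * m)) : ℝ) : ℂ) * z.2 /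
           (1 - (starRingEnd ℂ) a * z.1) ^ ((1 / m : ℂ))))
      {z : ℂ × ℂ | ‖z.1‖ ^ 2 + ‖z.2‖ ^ (2 * m) < 1}
      {z : ℂ × ℂ | ‖z.1‖ ^ 2 + ‖z.2‖ ^ (2 * m) < 1} ∧
    DifferentiableOn ℂ
      (fun z : ℂ × ℂ =>
        ((z.1 - a) / (1 - (starRingEnd ℂ) a * z.1),
         Complex.exp (θ * Complex.I) * (((1 - ‖a‖ ^ 2) ^ (1 / (2 * m)) : ℝ) : ℂ) * z.2 /
           (1 - (starRingEnd ℂ) a * z.1) ^ ((1 / m : ℂ))))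
      {z : ℂ × ℂ | ‖z.1‖ ^ 2 + ‖z.2‖ ^ (2 * m) < 1} := by
  have hA : (0:ℝ) < 1 - ‖a‖ ^ 2 := by nlinarith [norm_nonneg a]
  have habs1 : ∀ z : ℂ × ℂ, ‖z.1‖ ^ 2 + ‖z.2‖ ^ (2 * m) < 1 →
      ‖z.1‖ < 1 := by
    intro z hz
    have h2 : 0 ≤ ‖z.2‖ ^ (2 * m) := Real.rpow_nonneg (norm_nonneg _) _
    nlinarith [norm_nonneg z.1]
  have hc0 : (((1 - ‖a‖ ^ 2) ^ (1 / (2 * m)) : ℝ) : ℂ) ≠ 0 := by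
    exact_mod_cast (Real.rpow_pos_of_pos hA _).ne'
  have hexp : Complex.exp (θ * Complex.I) ≠ 0 := Complex.exp_ne_zero _
  have hne : (1 : ℂ) - a * (starRingEnd ℂ) a ≠ 0 := by
    rw [Complex.mul_conj, sub_ne_zero]
    intro h
    have : (Complex.normSq a : ℝ) = 1 := by exact_mod_cast h.symm
    have := Complex.sq_norm a
    nlinarith
  constructor
  · refine ⟨?_, ?_, ?_⟩
    · intro z hz
      simp only [Set.mem_setOf_eq] at hz ⊢
      exact (mem_iff m hm a ha θ (habs1 z hz)).mpr hz
    · intro z hz z' hz' heq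
      simp only [Set.mem_setOf_eq] at hz hz'
      have hz1 := habs1 z hz
      have hz1' := habs1 z' hz'
      have hd0 : (1 - (starRingEnd ℂ) a * z.1) ≠ 0 := ne_zero_of_repos (repos ha hz1)
      have hd0' : (1 - (starRingEnd ℂ) a * z'.1) ≠ 0 := ne_zero_of_repos (repos ha hz1')
      have h1 : (z.1 - a) / (1 - (starRingEnd ℂ) a * z.1)
          = (z'.1 - a) / (1 - (starRingEnd ℂ) a * z'.1) := congrArg Prod.fst heq
      have h2 := congrArg Prod.snd heq
      simp only at h1 h2
      rw [div_eq_div_iff hd0 hd0'] at h1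
      have hfst : z.1 = z'.1 := by
        have hz0 : ((1 : ℂ) - a * (starRingEnd ℂ) a) * (z.1 - z'.1) = 0 := by
          linear_combination h1
        rcases mul_eq_zero.mp hz0 with h | h
        · exact absurd h hne
        · exact sub_eq_zero.mp h
      have hdp : (1 - (starRingEnd ℂ) a * z'.1) ^ ((1 / m : ℂ)) ≠ 0 := by
        intro h
        exact hd0' ((Complex.cpow_eq_zero_iff _ _).mp h).1
      rw [hfst] at h2
      rw [div_eq_div_iff hdp hdp] at h2
      have h3 := mul_right_cancel₀ hdp h2
      have h4 := mul_left_cancel₀ (mul_ne_zero hexp hc0) h3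
      exact Prod.ext hfst h4
    · intro w hw
      simp only [Set.mem_setOf_eq] at hw
      have hw1 : ‖w.1‖ < 1 := habs1 w hw
      have hna : ‖-a‖ < 1 := by simpa using ha
      have hrepos := repos hna hw1
      rw [map_neg, neg_mul, sub_neg_eq_add] at hrepos
      have he : (1 + (starRingEnd ℂ) a * w.1) ≠ 0 := ne_zero_of_repos hrepos
      set z1 : ℂ := (w.1 + a) / (1 + (starRingEnd ℂ) a * w.1) with hz1def
      have hz1lt : ‖z1‖ < 1 := by
        rw [hz1def, norm_div, div_lt_one (norm_pos_iff.mpr he)]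
        have key := keyid (-a) w.1
        rw [map_neg, neg_mul, sub_neg_eq_add, sub_neg_eq_add, norm_neg] at key
        have hpos : 0 < (1 - ‖a‖ ^ 2) * (1 - ‖w.1‖ ^ 2) :=
          mul_pos hA (by nlinarith [norm_nonneg w.1])
        nlinarith [norm_nonneg (w.1 + a), norm_nonneg (1 + (starRingEnd ℂ) a * w.1)]
      have hd0 : (1 - (starRingEnd ℂ) a * z1) ≠ 0 := ne_zero_of_repos (repos ha hz1lt)
      have hdp : (1 - (starRingEnd ℂ) a * z1) ^ ((1 / m : ℂ)) ≠ 0 := by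
        intro h
        exact hd0 ((Complex.cpow_eq_zero_iff _ _).mp h).1
      set z2 : ℂ := (1 - (starRingEnd ℂ) a * z1) ^ ((1 / m : ℂ)) * w.2 /
        (Complex.exp (θ * Complex.I) * (((1 - ‖a‖ ^ 2) ^ (1 / (2 * m)) : ℝ) : ℂ)) with hz2def
      have hfirst : (z1 - a) / (1 - (starRingEnd ℂ) a * z1) = w.1 := by
        have hd_eq : 1 - (starRingEnd ℂ) a * z1
            = (1 - a * (starRingEnd ℂ) a) / (1 + (starRingEnd ℂ) a * w.1) := by
          rw [hz1def]; field_simp; ring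
        have hn_eq : z1 - a
            = w.1 * (1 - a * (starRingEnd ℂ) a) / (1 + (starRingEnd ℂ) a * w.1) := by
          rw [hz1def, eq_div_iff he, sub_mul, div_mul_cancel₀ _ he]; ring
        rw [hn_eq, hd_eq]
        field_simp
        exact mul_div_cancel_right₀ _ (by rwa [mul_comm] at he)
      have hsecond : Complex.exp (θ * Complex.I) * (((1 - ‖a‖ ^ 2) ^ (1 / (2 * m)) : ℝ) : ℂ) * z2 /
          (1 - (starRingEnd ℂ) a * z1) ^ ((1 / m : ℂ)) = w.2 := by
        rw [hz2def]
        field_simp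
      refine ⟨(z1, z2), ?_, ?_⟩
      · simp only [Set.mem_setOf_eq]
        have := (mem_iff m hm a ha θ (z := (z1, z2)) hz1lt).mp
        apply this
        rw [hfirst, hsecond]
        exact hw
      · exact Prod.ext hfirst hsecond
  · intro z hz
    simp only [Set.mem_setOf_eq] at hz
    have hz1 : ‖z.1‖ < 1 := habs1 z hz
    have hrepos := repos ha hz1
    have hd0 : (1 - (starRingEnd ℂ) a * z.1) ≠ 0 := ne_zero_of_repos hrepos
    have hslit : (1 - (starRingEnd ℂ) a * z.1) ∈ Complex.slitPlane := Or.inl hrepos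
    have hdp : (1 - (starRingEnd ℂ) a * z.1) ^ ((1 / m : ℂ)) ≠ 0 := by
      intro h
      exact hd0 ((Complex.cpow_eq_zero_iff _ _).mp h).1
    have hden : DifferentiableAt ℂ (fun z : ℂ × ℂ => 1 - (starRingEnd ℂ) a * z.1) z :=
      (differentiableAt_const 1).sub (differentiableAt_fst.const_mul _)
    apply DifferentiableAt.differentiableWithinAt
    apply DifferentiableAt.prodMk
    · have hnum1 : DifferentiableAt ℂ (fun x : ℂ × ℂ => x.1 - a) z :=
        differentiableAt_fst.sub (differentiableAt_const a)
      simp only [div_eq_mul_inv]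
      exact hnum1.mul (hden.inv hd0)
    · have hnum2 : DifferentiableAt ℂ (fun x : ℂ × ℂ =>
          Complex.exp (θ * Complex.I) * (((1 - ‖a‖ ^ 2) ^ (1 / (2 * m)) : ℝ) : ℂ) * x.2) z :=
        differentiableAt_snd.const_mul _
      have hden2 : DifferentiableAt ℂ (fun x : ℂ × ℂ =>
          (1 - (starRingEnd ℂ) a * x.1) ^ ((1 / m : ℂ))) z :=
        hden.cpow (differentiableAt_const _) hslit
      simp only [div_eq_mul_inv]
      exact hnum2.mul (hden2.inv hdp)
end

section
/- Let p₁,...,pₙ > 0 and z⁰ ∈ ∂E(p) (i.e. ∑ⱼ |z⁰ⱼ|^{2pⱼ} = 1), and suppose z⁰₁·...·z⁰ₖ ≠ 0 for some k ≥ 1. If ψ : E → E(p) is holomorphic on the unit disk E, continuous on its closure, with ψ(0) = (0,...,0, z⁰_{k+1},...,z⁰ₙ) and ψ'(0) = t·(z⁰₁,...,z⁰ₖ, 0,...,0) for some t > 0, then t ≤ 1. -/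
open Metric Set Filter Real intervalIntegral

private lemma meanValueCircle {g : ℂ → ℂ} {a : ℂ} {r : ℝ} (hr : 0 < r)
    (hg : DiffContOnCl ℂ g (ball a r)) :
    ∫ θ in (0:ℝ)..(2*π), g (circleMap a r θ) = (2*π : ℝ) * g a := by
  have h := hg.circleIntegral_sub_inv_smul (mem_ball_self hr)
  rw [circleIntegral] at h
  have key : ∀ θ : ℝ, deriv (circleMap a r) θ •
      ((circleMap a r θ - a)⁻¹ • g (circleMap a r θ)) = Complex.I * g (circleMap a r θ) := by
    intro θ
    rw [deriv_circleMap, circleMap_sub_center, smul_eq_mul, smul_eq_mul]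
    have h0 : circleMap 0 r θ ≠ 0 := circleMap_ne_center hr.ne'
    field_simp
  simp only [key] at h
  rw [intervalIntegral.integral_const_mul] at h
  have h2 : Complex.I * ∫ θ in (0:ℝ)..(2*π), g (circleMap a r θ)
      = Complex.I * ((2*π : ℝ) * g a) := by
    rw [h, smul_eq_mul]; push_cast; ring
  exact mul_left_cancel₀ Complex.I_ne_zero h2

private lemma submeanCircle {f : ℂ → ℂ} {s : Set ℂ} (hs : IsOpen s) {a : ℂ} (ha : a ∈ s)
    (hf : DifferentiableOn ℂ f s) {α : ℝ} (hα : 0 < α) :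
    ∀ᶠ r in nhdsWithin (0:ℝ) (Set.Ioi 0), ‖f a‖ ^ α
      ≤ (2*π)⁻¹ * ∫ θ in (0:ℝ)..(2*π), ‖f (circleMap a r θ)‖ ^ α := by
  rcases eq_or_ne (f a) 0 with h0 | h0
  · filter_upwards [self_mem_nhdsWithin] with r _
    rw [h0, norm_zero, Real.zero_rpow hα.ne']
    have hnn : 0 ≤ ∫ θ in (0:ℝ)..(2*π), ‖f (circleMap a r θ)‖ ^ α :=
      intervalIntegral.integral_nonneg (by positivity)
        (fun θ _ => Real.rpow_nonneg (norm_nonneg _) _)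
    positivity
  · have hfa : 0 < ‖f a‖ := norm_pos_iff.mpr h0
    have hca : ContinuousAt f a := hf.continuousOn.continuousAt (hs.mem_nhds ha)
    have h1 : ∀ᶠ z in nhds a, ‖f z - f a‖ < ‖f a‖ := by
      have := hca.tendsto (Metric.ball_mem_nhds (f a) hfa)
      filter_upwards [this] with z hz
      simpa [Complex.dist_eq] using hz
    obtain ⟨ρ, hρpos, hρ⟩ := Metric.eventually_nhds_iff.mp (h1.and (hs.eventually_mem ha))
    -- on ball a ρ : |f z - f a| < |f a| and z ∈ s
    set g : ℂ → ℂ := fun z => Complex.exp ((α : ℂ) * Complex.log (f z / f a)) with hgdef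
    have hslit : ∀ z, dist z a < ρ → f z / f a ∈ Complex.slitPlane := by
      intro z hz
      have h2 := (hρ hz).1
      refine Complex.mem_slitPlane_iff.mpr (Or.inl ?_)
      have : ‖f z / f a - 1‖ < 1 := by
        rw [show f z / f a - 1 = (f z - f a) / f a by field_simp]
        rw [norm_div]
        rw [div_lt_one hfa]
        exact h2
      have := (Complex.abs_re_le_norm (f z / f a - 1)).trans_lt this
      have := abs_lt.mp this
      have h3 : (f z / f a - 1).re = (f z / f a).re - 1 := by simp
      linarith [this.1, h3 ▸ this.1]
    have hgd : DifferentiableOn ℂ g (ball a ρ) := by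
      apply DifferentiableOn.cexp
      apply DifferentiableOn.const_mul
      apply DifferentiableOn.clog
      · exact (hf.mono (fun z hz => (hρ (mem_ball.mp hz)).2)).div_const _
      · intro z hz; exact hslit z (mem_ball.mp hz)
    filter_upwards [self_mem_nhdsWithin,
      (gt_mem_nhds hρpos).filter_mono nhdsWithin_le_nhds] with r hr hrρ
    have hr0 : (0:ℝ) < r := hr
    have hsubρ : closedBall a r ⊆ ball a ρ := closedBall_subset_ball hrρ
    have hgdc : DiffContOnCl ℂ g (ball a r) :=
      ⟨hgd.mono (ball_subset_ball hrρ.le),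
        (hgd.continuousOn).mono (by rw [closure_ball a hr0.ne']; exact hsubρ)⟩
    have hmv := meanValueCircle hr0 hgdc
    have hga : g a = 1 := by
      rw [hgdef]; simp [div_self h0]
    rw [hga, mul_one] at hmv
    -- norms
    have habs : ∀ z, dist z a < ρ →
        ‖g z‖ = ‖f z‖ ^ α / ‖f a‖ ^ α := by
      intro z hz
      have hfz : f z ≠ 0 := by
        intro hzz
        have := (hρ hz).1
        rw [hzz, zero_sub, norm_neg] at this
        exact absurd this (lt_irrefl _)
      have hw : ‖f z / f a‖ ≠ 0 := by
        simp [hfz, h0]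
      rw [hgdef]
      simp only [Complex.norm_exp]
      have hre : ((α : ℂ) * Complex.log (f z / f a)).re
          = α * Real.log (‖f z / f a‖) := by
        rw [Complex.re_ofReal_mul, Complex.log_re]
      rw [hre, mul_comm, ← Real.rpow_def_of_pos (lt_of_le_of_ne (norm_nonneg _) (Ne.symm hw))]
      rw [norm_div, Real.div_rpow (norm_nonneg _) (norm_nonneg _)]
    have hnorm : (2*π : ℝ) ≤ ∫ θ in (0:ℝ)..(2*π),
        ‖f (circleMap a r θ)‖ ^ α / ‖f a‖ ^ α := by
      have := intervalIntegral.norm_integral_le_integral_norm (μ := MeasureTheory.volume)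
        (a := (0:ℝ)) (b := 2*π) (f := fun θ => g (circleMap a r θ)) (by positivity)
      rw [hmv] at this
      calc (2*π : ℝ) = ‖((2*π : ℝ) : ℂ)‖ := by
            rw [Complex.norm_real, Real.norm_eq_abs, abs_of_pos Real.two_pi_pos]
        _ ≤ ∫ θ in (0:ℝ)..(2*π), ‖g (circleMap a r θ)‖ := this
        _ = ∫ θ in (0:ℝ)..(2*π), ‖f (circleMap a r θ)‖ ^ α / ‖f a‖ ^ α := by
            apply intervalIntegral.integral_congr
            intro θ _
            have hmem : dist (circleMap a r θ) a < ρ := by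
              have := circleMap_mem_closedBall a hr0.le θ
              rw [mem_closedBall] at this
              linarith
            exact habs _ hmem
    rw [intervalIntegral.integral_div] at hnorm
    have hfaα : 0 < ‖f a‖ ^ α := Real.rpow_pos_of_pos hfa _
    have h2πpos : (0:ℝ) < 2*π := Real.two_pi_pos
    rw [le_div_iff₀ hfaα] at hnorm
    rw [inv_mul_eq_div, le_div_iff₀ h2πpos]
    linarith



private lemma avgStrict {G : ℝ → ℝ} (hG : Continuous G) {M c θ₀ : ℝ}
    (hle : ∀ θ, G θ ≤ M) (hθ₀ : θ₀ ∈ Set.Ioo c (c + 2*π)) (hlt : G θ₀ < M) :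
    ∫ θ in c..(c + 2*π), G θ < 2*π * M := by
  have hint : IntervalIntegrable G MeasureTheory.volume c (c + 2*π) :=
    hG.intervalIntegrable _ _
  have hintH : IntervalIntegrable (fun θ => M - G θ) MeasureTheory.volume c (c + 2*π) :=
    (continuous_const.sub hG).intervalIntegrable _ _
  have hcc : c < c + 2*π := by linarith [Real.two_pi_pos]
  -- positive integral of M - G
  have hpos : 0 < ∫ θ in c..(c + 2*π), (M - G θ) := by
    rw [intervalIntegral.integral_pos_iff_support_of_nonneg_ae]
    · refine ⟨hcc, ?_⟩
      have hopen : IsOpen ({θ | G θ < M} ∩ Set.Ioo c (c + 2*π)) :=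
        (isOpen_lt hG continuous_const).inter isOpen_Ioo
      obtain ⟨δ, hδ, hball⟩ := Metric.isOpen_iff.mp hopen θ₀ ⟨hlt, hθ₀⟩
      have hIoo : Set.Ioo (θ₀ - δ) (θ₀ + δ) ⊆
          Function.support (fun θ => M - G θ) ∩ Set.Ioc c (c + 2*π) := by
        intro x hx
        have hx' := hball (by rw [Real.ball_eq_Ioo]; exact hx)
        exact ⟨by simp [sub_ne_zero]; exact hx'.1.ne', ⟨hx'.2.1, hx'.2.2.le⟩⟩
      calc (0:ENNReal) < MeasureTheory.volume (Set.Ioo (θ₀ - δ) (θ₀ + δ)) := by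
            rw [Real.volume_Ioo]; simp; linarith
        _ ≤ _ := MeasureTheory.measure_mono hIoo
    · exact MeasureTheory.ae_of_all _ (fun θ => sub_nonneg.mpr (hle θ))
    · exact hintH
  have := intervalIntegral.integral_sub (_root_.intervalIntegrable_const (c := M)) hint
  rw [intervalIntegral.integral_const] at this
  rw [this] at hpos
  have : (c + 2*π - c) • M = 2*π*M := by rw [smul_eq_mul]; ring_nf
  linarith [hpos, this ▸ hpos]

private lemma maxPrinciple {v : ℂ → ℝ} (hv : ContinuousOn v (closedBall 0 1))
    (hsub : ∀ a ∈ ball (0:ℂ) 1, ∀ᶠ r in nhdsWithin (0:ℝ) (Set.Ioi 0),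
      v a ≤ (2*π)⁻¹ * ∫ θ in (0:ℝ)..(2*π), v (circleMap a r θ))
    (hbd : ∀ z ∈ sphere (0:ℂ) 1, v z ≤ 1) : v 0 ≤ 1 := by
  have h01 : (0:ℂ) ∈ closedBall (0:ℂ) 1 := mem_closedBall_self one_pos.le
  obtain ⟨x₀, hx₀mem, hx₀max⟩ := (isCompact_closedBall (0:ℂ) 1).exists_isMaxOn ⟨0, h01⟩ hv
  set M := v x₀ with hMdef
  by_contra hcon
  push_neg at hcon
  have hM : 1 < M := lt_of_lt_of_le hcon (hx₀max h01)
  set A := {x | x ∈ closedBall (0:ℂ) 1 ∧ v x = M} with hAdef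
  have hAcl : IsClosed A := by
    have heq : A = closedBall 0 1 ∩ v ⁻¹' {M} := by ext x; simp [hAdef]
    rw [heq]
    exact hv.preimage_isClosed_of_isClosed Metric.isClosed_closedBall isClosed_singleton
  have hAball : A ⊆ ball (0:ℂ) 1 := by
    intro x hx
    rcases lt_or_eq_of_le (mem_closedBall.mp hx.1) with h | h
    · exact mem_ball.mpr h
    · exact absurd (hx.2 ▸ hbd x (mem_sphere.mpr h)) (by linarith)
  have hAcpt : IsCompact A :=
    (isCompact_closedBall (0:ℂ) 1).of_isClosed_subset hAcl (fun x hx => hx.1)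
  obtain ⟨x₁, hx₁A, hx₁max⟩ := hAcpt.exists_isMaxOn ⟨x₀, hx₀mem, rfl⟩
    continuous_norm.continuousOn
  set u : ℂ := if x₁ = 0 then 1 else ‖x₁‖⁻¹ • x₁ with hudef
  have hu1 : ‖u‖ = 1 := by
    rw [hudef]
    split_ifs with h
    · simp
    · rw [norm_smul, norm_inv, norm_norm]
      exact inv_mul_cancel₀ (norm_ne_zero_iff.mpr h)
  have hnorm_add : ∀ r : ℝ, 0 ≤ r → ‖x₁ + (r : ℂ) * u‖ = ‖x₁‖ + r := by
    intro r hr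
    rw [hudef]
    split_ifs with h
    · simp [h, abs_of_nonneg hr]
    · have hx1 : (0:ℝ) < ‖x₁‖ := norm_pos_iff.mpr h
      have : x₁ + (r:ℂ) * (‖x₁‖⁻¹ • x₁) = ((1 + r * ‖x₁‖⁻¹ : ℝ) : ℂ) * x₁ := by
        rw [Complex.real_smul]; push_cast; ring
      rw [this, norm_mul, Complex.norm_real, Real.norm_eq_abs,
        abs_of_pos (by positivity)]
      have hne : ‖x₁‖ ≠ 0 := ne_of_gt hx1
      field_simp
  have hx₁ball : x₁ ∈ ball (0:ℂ) 1 := hAball hx₁A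
  have hx₁lt : ‖x₁‖ < 1 := by simpa [mem_ball, dist_zero_right] using hx₁ball
  -- pick r
  obtain ⟨r, hrsub, hrlt, hr0⟩ : ∃ r : ℝ,
      (v x₁ ≤ (2*π)⁻¹ * ∫ θ in (0:ℝ)..(2*π), v (circleMap x₁ r θ)) ∧
      r < 1 - ‖x₁‖ ∧ 0 < r := by
    have h1 := hsub x₁ hx₁ball
    have h2 : ∀ᶠ r in nhdsWithin (0:ℝ) (Set.Ioi 0), r < 1 - ‖x₁‖ :=
      (gt_mem_nhds (by linarith)).filter_mono nhdsWithin_le_nhds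
    have h3 := (h1.and (h2.and self_mem_nhdsWithin))
    obtain ⟨r, hr⟩ := h3.exists
    exact ⟨r, hr.1, hr.2.1, hr.2.2⟩
  -- circle lies in closed ball
  have hcirc : ∀ θ, circleMap x₁ r θ ∈ closedBall (0:ℂ) 1 := by
    intro θ
    have h := circleMap_mem_closedBall x₁ hr0.le θ
    refine closedBall_subset_closedBall' ?_ h
    rw [dist_zero_right]; linarith
  have hvM : ∀ θ, v (circleMap x₁ r θ) ≤ M := fun θ => hx₀max (hcirc θ)
  -- the point b
  set b : ℂ := x₁ + (r : ℂ) * u with hbdef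
  have hbnorm : ‖b‖ = ‖x₁‖ + r := hnorm_add r hr0.le
  have hbball : b ∈ closedBall (0:ℂ) 1 := by
    rw [mem_closedBall, dist_zero_right, hbnorm]; linarith
  have hbsphere : b ∈ sphere x₁ |r| := by
    rw [mem_sphere, hbdef, dist_eq_norm]
    simp [norm_mul, hu1, Complex.norm_real, Real.norm_eq_abs]
  obtain ⟨θb, hθb⟩ : ∃ θ, circleMap x₁ r θ = b := by
    have := range_circleMap x₁ r
    rw [← this] at hbsphere
    exact hbsphere
  have hvb : v b < M := by
    have hvbM : v b ≤ M := hx₀max hbball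
    rcases lt_or_eq_of_le hvbM with h | h
    · exact h
    · exfalso
      have : b ∈ A := ⟨hbball, h⟩
      have h2 : ‖b‖ ≤ ‖x₁‖ := hx₁max this
      rw [hbnorm] at h2
      linarith
  -- G and periodicity
  set G : ℝ → ℝ := fun θ => v (circleMap x₁ r θ) with hGdef
  have hGcont : Continuous G :=
    hv.comp_continuous (continuous_circleMap x₁ r) hcirc
  have hGper : Function.Periodic G (2*π) :=
    (periodic_circleMap x₁ r).comp v
  have hshift : ∫ θ in (0:ℝ)..(2*π), G θ = ∫ θ in (θb - π)..((θb - π) + 2*π), G θ := by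
    have := hGper.intervalIntegral_add_eq (θb - π) 0
    rw [this]; norm_num
  have hθbIoo : θb ∈ Set.Ioo (θb - π) ((θb - π) + 2*π) := by
    constructor <;> [linarith [Real.pi_pos]; linarith [Real.pi_pos]]
  have hstrict : ∫ θ in (θb - π)..((θb - π) + 2*π), G θ < 2*π*M :=
    avgStrict hGcont hvM hθbIoo (by rw [hGdef]; simp only; rw [hθb]; exact hvb)
  have hMle : M ≤ (2*π)⁻¹ * ∫ θ in (0:ℝ)..(2*π), G θ := hx₁A.2 ▸ hrsub
  have h2πpos : (0:ℝ) < 2*π := Real.two_pi_pos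
  rw [hshift] at hMle
  have : M < (2*π)⁻¹ * (2*π*M) := lt_of_le_of_lt hMle (by
    apply mul_lt_mul_of_pos_left hstrict (by positivity))
  rw [← mul_assoc, inv_mul_cancel₀ h2πpos.ne', one_mul] at this
  exact lt_irrefl _ this

theorem stmt9 (n k : ℕ) (hk : 1 ≤ k) (hkn : k ≤ n)
    (p : Fin n → ℝ) (hp : ∀ j, 0 < p j)
    (z0 : Fin n → ℂ) (hz0 : ∑ j, ‖z0 j‖ ^ (2 * p j) = 1)
    (hz0k : ∀ j : Fin n, (j : ℕ) < k → z0 j ≠ 0)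
    (ψ : ℂ → Fin n → ℂ)
    (hψd : DifferentiableOn ℂ ψ (Metric.ball 0 1))
    (hψc : ContinuousOn ψ (Metric.closedBall 0 1))
    (hψmaps : Set.MapsTo ψ (Metric.ball 0 1)
      {z : Fin n → ℂ | ∑ j, ‖z j‖ ^ (2 * p j) < 1})
    (t : ℝ) (ht : 0 < t)
    (hψ0 : ∀ j : Fin n, ψ 0 j = if (j : ℕ) < k then 0 else z0 j)
    (hψ'0 : ∀ j : Fin n, deriv ψ 0 j = if (j : ℕ) < k then (t : ℂ) * z0 j else 0) :
    t ≤ 1 := by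
  classical
  have h0ball : (0:ℂ) ∈ ball (0:ℂ) 1 := mem_ball_self one_pos
  -- components of ψ
  set F : Fin n → ℂ → ℂ := fun j z => ψ z j with hFdef
  have hFd : ∀ j, DifferentiableOn ℂ (F j) (ball 0 1) := by
    intro j z hz
    exact (differentiableWithinAt_pi.mp (hψd z hz)) j
  have hFc : ∀ j, ContinuousOn (F j) (closedBall 0 1) :=
    fun j => (continuous_apply j).comp_continuousOn hψc
  have hψat : DifferentiableAt ℂ ψ 0 :=
    (hψd 0 h0ball).differentiableAt (isOpen_ball.mem_nhds h0ball)
  have hFat : ∀ j, DifferentiableAt ℂ (F j) 0 :=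
    fun j => (differentiableAt_pi.mp hψat) j
  have hFderiv : ∀ j, deriv (F j) 0 = deriv ψ 0 j := by
    intro j
    have h1 : HasDerivAt ψ (deriv ψ 0) 0 := hψat.hasDerivAt
    have h2 : HasDerivAt (F j) (deriv ψ 0 j) 0 :=
      ((ContinuousLinearMap.proj (R := ℂ) (φ := fun _ : Fin n => ℂ) j).hasFDerivAt).comp_hasDerivAt 0 h1
    exact h2.deriv
  -- the functions φ j
  set φ : Fin n → ℂ → ℂ := fun j => if (j : ℕ) < k then dslope (F j) 0 else F j with hφdef
  have hφd : ∀ j, DifferentiableOn ℂ (φ j) (ball 0 1) := by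
    intro j
    simp only [hφdef]
    split_ifs with h
    · exact (Complex.differentiableOn_dslope (isOpen_ball.mem_nhds h0ball)).mpr (hFd j)
    · exact hFd j
  have hφc : ∀ j, ContinuousOn (φ j) (closedBall 0 1) := by
    intro j
    simp only [hφdef]
    split_ifs with h
    · exact (continuousOn_dslope (closedBall_mem_nhds 0 one_pos)).mpr ⟨hFc j, hFat j⟩
    · exact hFc j
  have hφ0 : ∀ j, φ j 0 = if (j : ℕ) < k then (t : ℂ) * z0 j else z0 j := by
    intro j
    simp only [hφdef]
    split_ifs with h
    · simp only [dslope_same, hFderiv j, hψ'0 j, if_pos h]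
    · simp only [hFdef, hψ0 j, if_neg h]
  have hφsphere : ∀ x ∈ sphere (0:ℂ) 1, ∀ j, ‖φ j x‖ = ‖ψ x j‖ := by
    intro x hx j
    have hx1 : ‖x‖ = 1 := by simpa [Complex.dist_eq] using hx
    have hxne : x ≠ (0:ℂ) := by
      intro h; rw [h] at hx1; simp at hx1
    simp only [hφdef]
    split_ifs with h
    · rw [dslope_of_ne _ hxne, slope_def_field, hFdef]
      simp only [hψ0 j, if_pos h, sub_zero, sub_zero]
      rw [div_eq_mul_inv, norm_mul, norm_inv, hx1]
      simp
    · rfl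
  -- the subharmonic candidate v
  set v : ℂ → ℝ := fun z => ∑ j, ‖φ j z‖ ^ (2 * p j) with hvdef
  have hvc : ContinuousOn v (closedBall 0 1) := by
    apply continuousOn_finset_sum
    intro j _
    exact (continuous_norm.comp_continuousOn (hφc j)).rpow_const
      (fun x _ => Or.inr (by linarith [hp j]))
  have hvsub : ∀ a ∈ ball (0:ℂ) 1, ∀ᶠ r in nhdsWithin (0:ℝ) (Set.Ioi 0),
      v a ≤ (2*π)⁻¹ * ∫ θ in (0:ℝ)..(2*π), v (circleMap a r θ) := by
    intro a ha
    have hj : ∀ j : Fin n, ∀ᶠ r in nhdsWithin (0:ℝ) (Set.Ioi 0),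
        ‖φ j a‖ ^ (2 * p j)
          ≤ (2*π)⁻¹ * ∫ θ in (0:ℝ)..(2*π), ‖φ j (circleMap a r θ)‖ ^ (2 * p j) :=
      fun j => submeanCircle isOpen_ball ha (hφd j) (by linarith [hp j])
    have hna : ‖a‖ < 1 := by simpa [mem_ball, dist_zero_right] using ha
    filter_upwards [eventually_all.mpr hj,
      (gt_mem_nhds (by linarith : (0:ℝ) < 1 - ‖a‖)).filter_mono nhdsWithin_le_nhds,
      self_mem_nhdsWithin] with r hr1 hr2 hr0
    have hr0' : (0:ℝ) < r := hr0
    have hcirc : ∀ θ, circleMap a r θ ∈ closedBall (0:ℂ) 1 := by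
      intro θ
      refine closedBall_subset_closedBall' ?_ (circleMap_mem_closedBall a hr0'.le θ)
      rw [dist_zero_right]; linarith
    have hint : ∀ j : Fin n, IntervalIntegrable
        (fun θ => ‖φ j (circleMap a r θ)‖ ^ (2 * p j))
        MeasureTheory.volume 0 (2*π) := by
      intro j
      apply Continuous.intervalIntegrable
      have hc1 : Continuous fun θ => φ j (circleMap a r θ) :=
        (hφc j).comp_continuous (continuous_circleMap a r) hcirc
      exact (continuous_norm.comp hc1).rpow_const (fun x => Or.inr (by linarith [hp j]))
    calc v a ≤ ∑ j, (2*π)⁻¹ * ∫ θ in (0:ℝ)..(2*π),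
          ‖φ j (circleMap a r θ)‖ ^ (2 * p j) :=
        Finset.sum_le_sum (fun j _ => hr1 j)
      _ = (2*π)⁻¹ * ∑ j, ∫ θ in (0:ℝ)..(2*π),
          ‖φ j (circleMap a r θ)‖ ^ (2 * p j) := by rw [Finset.mul_sum]
      _ = (2*π)⁻¹ * ∫ θ in (0:ℝ)..(2*π), v (circleMap a r θ) := by
          simp only [hvdef]
          rw [intervalIntegral.integral_finset_sum (fun j _ => hint j)]
  have hvbd : ∀ x ∈ sphere (0:ℂ) 1, v x ≤ 1 := by
    intro x hx
    have hveq : v x = ∑ j, ‖ψ x j‖ ^ (2 * p j) := by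
      apply Finset.sum_congr rfl
      intro j _
      rw [hφsphere x hx j]
    rw [hveq]
    have hxcl : x ∈ closure (ball (0:ℂ) 1) := by
      rw [closure_ball (0:ℂ) one_ne_zero]
      exact sphere_subset_closedBall hx
    have hhc : ContinuousOn (fun z => ∑ j, ‖ψ z j‖ ^ (2 * p j)) (closedBall 0 1) := by
      apply continuousOn_finset_sum
      intro j _
      exact (continuous_norm.comp_continuousOn (hFc j)).rpow_const
        (fun y _ => Or.inr (by linarith [hp j]))
    refine ContinuousWithinAt.closure_le (f := fun z => ∑ j, ‖ψ z j‖ ^ (2 * p j))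
      (g := fun _ => (1:ℝ)) hxcl ?_ continuousWithinAt_const ?_
    · exact ((hhc x (sphere_subset_closedBall hx)).mono ball_subset_closedBall)
    · intro y hy
      exact le_of_lt (hψmaps hy)
  have hv0 : v 0 ≤ 1 := maxPrinciple hvc hvsub hvbd
  -- final computation
  by_contra hcon
  push_neg at hcon
  have hv0eq : v 0 = ∑ j : Fin n, ‖if (j : ℕ) < k then (t : ℂ) * z0 j else z0 j‖ ^ (2 * p j) := by
    apply Finset.sum_congr rfl
    intro j _
    rw [hφ0 j]
  have hstrict : (1:ℝ) < v 0 := by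
    rw [hv0eq, ← hz0]
    apply Finset.sum_lt_sum
    · intro j _
      split_ifs with h
      · apply Real.rpow_le_rpow (norm_nonneg _) _ (by linarith [hp j])
        rw [norm_mul, Complex.norm_real, Real.norm_eq_abs, abs_of_pos ht]
        nlinarith [norm_nonneg (z0 j), norm_pos_iff.mpr (hz0k j h)]
      · exact le_rfl
    · refine ⟨⟨0, by omega⟩, Finset.mem_univ _, ?_⟩
      have h0k : ((⟨0, by omega⟩ : Fin n) : ℕ) < k := hk
      rw [if_pos h0k]
      apply Real.rpow_lt_rpow (norm_nonneg _) _ (by linarith [hp (⟨0, by omega⟩ : Fin n)])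
      rw [norm_mul, Complex.norm_real, Real.norm_eq_abs, abs_of_pos ht]
      nlinarith [norm_pos_iff.mpr (hz0k _ h0k)]
  linarith
end

section
/- Let p₁,...,pₙ > 0 and let ψ : E → closure(E(p)) be holomorphic with ψⱼ(λ) = λ·Aⱼ(λ) for j = 1,...,k, where each Aⱼ is holomorphic and bounded on E. If ∑_{j=1}^{k} |Aⱼ(λ)|^{2pⱼ} + ∑_{j=k+1}^{n} |ψⱼ(λ)|^{2pⱼ} ≤ 1 for all λ on the boundary circle (in the sense of radial boundary values, assuming ψ and the Aⱼ extend continuously to the closed disk), then ∑_{j=1}^{k} |Aⱼ(0)|^{2pⱼ} + ∑_{j=k+1}^{n} |ψⱼ(0)|^{2pⱼ} ≤ 1. -/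
open Complex Metric Set MeasureTheory intervalIntegral

private lemma meanValue_aux {f : ℂ → ℂ} {c : ℂ} {R : ℝ} (hR : 0 < R)
    (hc : ContinuousOn f (closedBall c R))
    (hd : ∀ x ∈ ball c R, DifferentiableAt ℂ f x) :
    ((2 * Real.pi : ℝ) : ℂ) * f c = ∫ θ in (0:ℝ)..2 * Real.pi, f (circleMap c R θ) := by
  have h := Complex.circleIntegral_sub_inv_smul_of_differentiable_on_off_countable
    (Set.countable_empty) (Metric.mem_ball_self hR) hc (fun x hx => hd x hx.1)
  rw [circleIntegral] at h
  have h2 : ∀ θ : ℝ, deriv (circleMap c R) θ • (circleMap c R θ - c)⁻¹ • f (circleMap c R θ)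
      = Complex.I * f (circleMap c R θ) := by
    intro θ
    rw [deriv_circleMap, circleMap_sub_center, smul_eq_mul, smul_eq_mul]
    have hne : circleMap 0 R θ ≠ 0 := by simpa [circleMap_eq_center_iff] using hR.ne'
    field_simp
  simp only [h2] at h
  rw [intervalIntegral.integral_const_mul] at h
  have hI : (Complex.I : ℂ) ≠ 0 := Complex.I_ne_zero
  apply mul_left_cancel₀ hI
  rw [smul_eq_mul] at h
  push_cast
  linear_combination -h

private lemma submean_aux {f : ℂ → ℂ} {z0 : ℂ} {q r : ℝ} (hq : 0 < q) (hr : 0 < r)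
    (hd : ∀ x ∈ closedBall z0 r, DifferentiableAt ℂ f x)
    (hsmall : ∀ x ∈ closedBall z0 r, ‖f x - f z0‖ < ‖f z0‖) :
    ‖f z0‖ ^ q ≤
      (2 * Real.pi)⁻¹ * ∫ θ in (0:ℝ)..2 * Real.pi, ‖f (circleMap z0 r θ)‖ ^ q := by
  have h0 : f z0 ≠ 0 := by
    intro h
    have := hsmall z0 (mem_closedBall_self hr.le)
    simp [h] at this
  have habs0 : 0 < ‖f z0‖ := norm_pos_iff.mpr h0
  have hfx : ∀ x ∈ closedBall z0 r, f x ≠ 0 := by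
    intro x hx h
    have := hsmall x hx
    rw [h, zero_sub] at this
    simp at this
  set g : ℂ → ℂ := fun z => Complex.exp (q * Complex.log (f z / f z0)) with hg
  have hslit : ∀ x ∈ closedBall z0 r, f x / f z0 ∈ Complex.slitPlane := by
    intro x hx
    have he : f x / f z0 = 1 + (f x - f z0) / f z0 := by field_simp; ring
    rw [he]
    apply Complex.mem_slitPlane_of_norm_lt_one
    rw [norm_div, div_lt_one (by simpa using habs0)]
    simpa using hsmall x hx
  have hgd : ∀ x ∈ closedBall z0 r, DifferentiableAt ℂ g x := fun x hx =>
    ((((hd x hx).div_const _).clog (hslit x hx)).const_mul _).cexp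
  have habsg : ∀ x ∈ closedBall z0 r, ‖g x‖
      = ‖f x‖ ^ q / ‖f z0‖ ^ q := by
    intro x hx
    have hfxpos : 0 < ‖f x / f z0‖ := by
      rw [norm_div]
      exact div_pos (norm_pos_iff.mpr (hfx x hx)) habs0
    rw [hg]
    simp only []
    rw [Complex.norm_exp]
    have hre : ((q : ℂ) * Complex.log (f x / f z0)).re
        = q * Real.log (‖f x / f z0‖) := by
      simp [Complex.mul_re, Complex.log_re]
    rw [hre, mul_comm, ← Real.rpow_def_of_pos hfxpos, norm_div,
      Real.div_rpow (norm_nonneg _) (norm_nonneg _)]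
  have hg0 : g z0 = 1 := by
    simp [hg, div_self h0]
  have hmv := meanValue_aux hr (fun x hx => (hgd x hx).continuousAt.continuousWithinAt)
      (fun x hx => hgd x (ball_subset_closedBall hx))
  rw [hg0, mul_one] at hmv
  have hpi : (0:ℝ) < 2 * Real.pi := by positivity
  have hC : 0 < ‖f z0‖ ^ q := Real.rpow_pos_of_pos habs0 q
  have key : 2 * Real.pi ≤ (∫ θ in (0:ℝ)..2*Real.pi,
      ‖f (circleMap z0 r θ)‖ ^ q) / ‖f z0‖ ^ q := by
    have c1 : (2 * Real.pi : ℝ) = ‖∫ θ in (0:ℝ)..2*Real.pi, g (circleMap z0 r θ)‖ := by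
      rw [← hmv, Complex.norm_of_nonneg hpi.le]
    refine le_trans (le_of_eq c1) ?_
    calc ‖∫ θ in (0:ℝ)..2*Real.pi, g (circleMap z0 r θ)‖
        ≤ ∫ θ in (0:ℝ)..2*Real.pi, ‖g (circleMap z0 r θ)‖ := by
          simpa using
            intervalIntegral.norm_integral_le_integral_norm
              (f := fun θ => g (circleMap z0 r θ)) hpi.le
      _ = ∫ θ in (0:ℝ)..2*Real.pi,
            ‖f (circleMap z0 r θ)‖ ^ q / ‖f z0‖ ^ q := by
          apply intervalIntegral.integral_congr
          intro θ _
          exact habsg _ (circleMap_mem_closedBall _ hr.le θ)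
      _ = (∫ θ in (0:ℝ)..2*Real.pi,
            ‖f (circleMap z0 r θ)‖ ^ q) / ‖f z0‖ ^ q := by
          rw [intervalIntegral.integral_div]
  have key2 := (le_div_iff₀ hC).mp key
  rw [inv_mul_eq_div, le_div_iff₀ hpi]
  linarith

set_option maxHeartbeats 2000000 in
theorem stmt10 (n k : ℕ) (hkn : k ≤ n) (p : Fin n → ℝ) (hp : ∀ j, 0 < p j)
    (ψ : ℂ → Fin n → ℂ) (A : Fin n → ℂ → ℂ)
    (hψd : DifferentiableOn ℂ ψ (Metric.ball 0 1))
    (hψc : ContinuousOn ψ (Metric.closedBall 0 1))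
    (hψmaps : Set.MapsTo ψ (Metric.ball 0 1)
      (closure {z : Fin n → ℂ | ∑ j : Fin n, ‖z j‖ ^ (2 * p j) < 1}))
    (hAd : ∀ j : Fin n, DifferentiableOn ℂ (A j) (Metric.ball 0 1))
    (hAc : ∀ j : Fin n, ContinuousOn (A j) (Metric.closedBall 0 1))
    (hψA : ∀ j : Fin n, (j : ℕ) < k → ∀ l ∈ Metric.closedBall (0 : ℂ) 1, ψ l j = l * A j l)
    (hbd : ∀ l : ℂ, ‖l‖ = 1 →
      ∑ j : Fin n, (if (j : ℕ) < k then ‖A j l‖ else ‖ψ l j‖) ^ (2 * p j) ≤ 1) :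
    ∑ j : Fin n, (if (j : ℕ) < k then ‖A j 0‖ else ‖ψ 0 j‖) ^ (2 * p j) ≤ 1 := by
  classical
  set F : Fin n → ℂ → ℂ := fun j l => if (j:ℕ) < k then A j l else ψ l j with hF
  have hFc : ∀ j, ContinuousOn (F j) (closedBall (0:ℂ) 1) := by
    intro j
    by_cases hj : (j:ℕ) < k
    · simpa [hF, hj] using hAc j
    · have : ContinuousOn (fun l => ψ l j) (closedBall (0:ℂ) 1) :=
        (continuous_apply j).comp_continuousOn hψc
      simpa [hF, hj] using this
  have hFd : ∀ j, ∀ x ∈ ball (0:ℂ) 1, DifferentiableAt ℂ (F j) x := by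
    intro j x hx
    by_cases hj : (j:ℕ) < k
    · have := (hAd j).differentiableAt (isOpen_ball.mem_nhds hx)
      simpa [hF, hj] using this
    · have := differentiableAt_pi.mp (hψd.differentiableAt (isOpen_ball.mem_nhds hx)) j
      simpa [hF, hj] using this
  set u : ℂ → ℝ := fun z => ∑ j, ‖F j z‖ ^ (2 * p j) with hu
  have hgoal : ∀ z, (∑ j : Fin n, (if (j:ℕ) < k then ‖A j z‖
      else ‖ψ z j‖) ^ (2*p j)) = u z := by
    intro z
    rw [hu]
    apply Finset.sum_congr rfl
    intro j _
    congr 1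
    by_cases hj : (j:ℕ) < k <;> simp [hF, hj]
  have hucont : ContinuousOn u (closedBall (0:ℂ) 1) := by
    apply continuousOn_finset_sum
    intro j _
    exact (continuous_norm.comp_continuousOn (hFc j)).rpow_const
      (fun x _ => Or.inr (by have := hp j; positivity))
  obtain ⟨z1, hz1mem, hz1max⟩ := (isCompact_closedBall (0:ℂ) 1).exists_isMaxOn
    ⟨0, mem_closedBall_self zero_le_one⟩ hucont
  set M := u z1 with hM
  have hle : ∀ z ∈ closedBall (0:ℂ) 1, u z ≤ M := fun z hz => hz1max hz
  set S : Set ℂ := closedBall 0 1 ∩ u ⁻¹' {M} with hS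
  have hSclosed : IsClosed S :=
    hucont.preimage_isClosed_of_isClosed Metric.isClosed_closedBall isClosed_singleton
  have hScpt : IsCompact S :=
    (isCompact_closedBall (0:ℂ) 1).of_isClosed_subset hSclosed Set.inter_subset_left
  obtain ⟨z0, hz0S, hz0max⟩ := hScpt.exists_isMaxOn ⟨z1, ⟨hz1mem, rfl⟩⟩
    continuous_norm.continuousOn
  have hz0cb : z0 ∈ closedBall (0:ℂ) 1 := hz0S.1
  have hz0M : u z0 = M := hz0S.2
  have habs1 : ‖z0‖ = 1 := by
    by_contra hne
    have hle1 : ‖z0‖ ≤ 1 := by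
      simpa using mem_closedBall_zero_iff.mp hz0cb
    have hlt : ‖z0‖ < 1 := lt_of_le_of_ne hle1 hne
    have hz0ball : z0 ∈ ball (0:ℂ) 1 := by
      simpa using mem_ball_zero_iff.mpr
        (show ‖z0‖ < 1 by simpa using hlt)
    set W : Fin n → Set ℂ := fun j => if F j z0 = 0 then Set.univ
      else ball (0:ℂ) 1 ∩ F j ⁻¹' (ball (F j z0) (‖F j z0‖)) with hW
    have hWopen : ∀ j, IsOpen (W j) := by
      intro j
      rw [hW]
      dsimp only
      split
      · exact isOpen_univ
      · exact ContinuousOn.isOpen_inter_preimage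
          (fun x hx => ((hFd j x hx).continuousAt).continuousWithinAt) isOpen_ball isOpen_ball
    have hWmem : ∀ j, z0 ∈ W j := by
      intro j
      by_cases h : F j z0 = 0
      · simp [hW, h]
      · rw [hW]
        dsimp only
        rw [if_neg h]
        refine ⟨hz0ball, ?_⟩
        have h2 : (0:ℝ) < ‖F j z0‖ := norm_pos_iff.mpr h
        exact Set.mem_preimage.mpr (mem_ball_self h2)
    set V : Set ℂ := ball 0 1 ∩ ⋂ j, W j with hV
    have hVopen : IsOpen V := isOpen_ball.inter (isOpen_iInter_of_finite hWopen)
    have hz0V : z0 ∈ V := ⟨hz0ball, Set.mem_iInter.mpr hWmem⟩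
    obtain ⟨ε, hε, hball⟩ := Metric.isOpen_iff.mp hVopen z0 hz0V
    set r : ℝ := ε/2 with hrdef
    have hr : 0 < r := by positivity
    have hcbV : closedBall z0 r ⊆ V :=
      subset_trans (closedBall_subset_ball (by rw [hrdef]; linarith)) hball
    have hcbball : closedBall z0 r ⊆ ball (0:ℂ) 1 := fun x hx => (hcbV hx).1
    have hpi : (0:ℝ) < 2 * Real.pi := by positivity
    have hcont : ∀ j, Continuous (fun θ : ℝ => ‖F j (circleMap z0 r θ)‖ ^ (2 * p j)) := by
      intro j
      have h1 : Continuous (fun θ : ℝ => F j (circleMap z0 r θ)) := by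
        have := (hFc j).comp_continuous (continuous_circleMap z0 r)
          (fun θ => ball_subset_closedBall (hcbball (circleMap_mem_closedBall _ hr.le θ)))
        exact this
      exact (continuous_norm.comp h1).rpow_const
        (fun x => Or.inr (by have := hp j; positivity))
    have hint : ∀ j, IntervalIntegrable
        (fun θ : ℝ => ‖F j (circleMap z0 r θ)‖ ^ (2*p j)) volume 0 (2*Real.pi) :=
      fun j => (hcont j).intervalIntegrable _ _
    have hterm : ∀ j, ‖F j z0‖ ^ (2*p j) ≤
        (2*Real.pi)⁻¹ * ∫ θ in (0:ℝ)..2*Real.pi, ‖F j (circleMap z0 r θ)‖ ^ (2*p j) := by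
      intro j
      by_cases h : F j z0 = 0
      · have hz : (0:ℝ) ^ (2*p j) = 0 := Real.zero_rpow (by have := hp j; positivity)
        rw [h, norm_zero, hz]
        exact mul_nonneg (by positivity) (intervalIntegral.integral_nonneg hpi.le
          (fun θ _ => Real.rpow_nonneg (norm_nonneg _) _))
      · apply submean_aux (by have := hp j; positivity) hr
        · exact fun x hx => hFd j x (hcbball hx)
        · intro x hx
          have hxW : x ∈ W j := (Set.mem_iInter.mp (hcbV hx).2) j
          rw [hW] at hxW
          dsimp only at hxW
          rw [if_neg h] at hxW
          simpa [Complex.dist_eq] using hxW.2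
    have hucircle : ∀ θ : ℝ, u (circleMap z0 r θ)
        = ∑ j, ‖F j (circleMap z0 r θ)‖ ^ (2*p j) := fun θ => rfl
    have hsum : M ≤ (2*Real.pi)⁻¹ * ∫ θ in (0:ℝ)..2*Real.pi, u (circleMap z0 r θ) := by
      calc M = u z0 := hz0M.symm
        _ = ∑ j, ‖F j z0‖ ^ (2*p j) := rfl
        _ ≤ ∑ j, (2*Real.pi)⁻¹ * ∫ θ in (0:ℝ)..2*Real.pi,
              ‖F j (circleMap z0 r θ)‖ ^ (2*p j) :=
            Finset.sum_le_sum (fun j _ => hterm j)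
        _ = (2*Real.pi)⁻¹ * ∑ j, ∫ θ in (0:ℝ)..2*Real.pi,
              ‖F j (circleMap z0 r θ)‖ ^ (2*p j) := by rw [← Finset.mul_sum]
        _ = (2*Real.pi)⁻¹ * ∫ θ in (0:ℝ)..2*Real.pi,
              ∑ j, ‖F j (circleMap z0 r θ)‖ ^ (2*p j) := by
            rw [← intervalIntegral.integral_finset_sum (fun j _ => hint j)]
        _ = (2*Real.pi)⁻¹ * ∫ θ in (0:ℝ)..2*Real.pi, u (circleMap z0 r θ) := by
            simp only [hucircle]
    set gg : ℝ → ℝ := fun θ => M - u (circleMap z0 r θ) with hgg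
    have hggnn : ∀ θ, 0 ≤ gg θ := fun θ => sub_nonneg.mpr
      (hle _ (ball_subset_closedBall (hcbball (circleMap_mem_closedBall _ hr.le θ))))
    have hucirc_cont : Continuous (fun θ : ℝ => u (circleMap z0 r θ)) := by
      have : (fun θ : ℝ => u (circleMap z0 r θ))
          = fun θ : ℝ => ∑ j, ‖F j (circleMap z0 r θ)‖ ^ (2*p j) := rfl
      rw [this]
      exact continuous_finset_sum _ (fun j _ => hcont j)
    have hgint : IntervalIntegrable gg volume 0 (2*Real.pi) :=
      (continuous_const.sub hucirc_cont).intervalIntegrable _ _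
    have hintzero : ∫ θ in (0:ℝ)..2*Real.pi, gg θ = 0 := by
      have h1 : ∫ θ in (0:ℝ)..2*Real.pi, gg θ
          = (2*Real.pi) * M - ∫ θ in (0:ℝ)..2*Real.pi, u (circleMap z0 r θ) := by
        rw [hgg, intervalIntegral.integral_sub intervalIntegrable_const
          (hucirc_cont.intervalIntegrable _ _), intervalIntegral.integral_const]
        simp [smul_eq_mul]
      have h2 : (2*Real.pi) * M ≤ ∫ θ in (0:ℝ)..2*Real.pi, u (circleMap z0 r θ) := by
        have := mul_le_mul_of_nonneg_left hsum hpi.le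
        rwa [mul_inv_cancel_left₀ hpi.ne'] at this
      have h3 : 0 ≤ ∫ θ in (0:ℝ)..2*Real.pi, gg θ :=
        intervalIntegral.integral_nonneg hpi.le (fun θ _ => hggnn θ)
      linarith
    have hae : gg =ᵐ[volume.restrict (Set.Ioc 0 (2*Real.pi))] 0 :=
      (intervalIntegral.integral_eq_zero_iff_of_le_of_nonneg_ae hpi.le
        (Filter.Eventually.of_forall hggnn) hgint).mp hintzero
    obtain ⟨θc, hθcIoc, hθcT⟩ : ∃ θc ∈ Set.Ioc (0:ℝ) (2*Real.pi),
        ‖z0‖ < ‖circleMap z0 r θc‖ := by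
      rcases eq_or_ne z0 0 with h|h
      · refine ⟨Real.pi, ⟨Real.pi_pos, by linarith [Real.pi_pos]⟩, ?_⟩
        simpa [h, norm_circleMap_zero, abs_of_pos hr] using hr
      · have ha1 : -Real.pi < Complex.arg z0 := Complex.neg_pi_lt_arg z0
        have ha2 : Complex.arg z0 ≤ Real.pi := Complex.arg_le_pi z0
        have habs0 : 0 < ‖z0‖ := norm_pos_iff.mpr h
        have hkey : ‖z0‖ < ‖circleMap z0 r (Complex.arg z0)‖ := by
          have hcm : circleMap z0 r (Complex.arg z0)
              = ((1 + r / ‖z0‖ : ℝ) : ℂ) * z0 := by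
            have hexp : Complex.exp ((Complex.arg z0 : ℂ) * Complex.I)
                = z0 / (‖z0‖ : ℂ) := by
              rw [eq_div_iff (by exact_mod_cast habs0.ne')]
              rw [mul_comm]
              exact Complex.norm_mul_exp_arg_mul_I z0
            simp only [circleMap, hexp]
            push_cast
            field_simp
          rw [hcm, norm_mul, Complex.norm_of_nonneg (by positivity)]
          have hd : r / ‖z0‖ * ‖z0‖ = r :=
            div_mul_cancel₀ _ habs0.ne'
          nlinarith
        by_cases hpos : 0 < Complex.arg z0
        · exact ⟨Complex.arg z0, ⟨hpos, by linarith [Real.pi_pos]⟩, hkey⟩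
        · push_neg at hpos
          refine ⟨Complex.arg z0 + 2*Real.pi, ⟨by linarith [Real.pi_pos], by linarith⟩, ?_⟩
          rwa [periodic_circleMap z0 r (Complex.arg z0)]
    set T : Set ℝ := {θ | ‖z0‖ < ‖circleMap z0 r θ‖} with hT
    have hTopen : IsOpen T := isOpen_lt continuous_const
      (continuous_norm.comp (continuous_circleMap _ _))
    obtain ⟨ε2, hε2, hball2⟩ := Metric.isOpen_iff.mp hTopen θc hθcT
    set J : Set ℝ := Set.Ioo (max 0 (θc - ε2)) θc with hJ
    have hJT : J ⊆ T := by
      intro θ hθ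
      apply hball2
      rw [Real.ball_eq_Ioo]
      exact ⟨lt_of_le_of_lt (le_max_right _ _) hθ.1, by linarith [hθ.2, hε2]⟩
    have hJIoc : J ⊆ Set.Ioc 0 (2*Real.pi) := fun θ hθ =>
      ⟨lt_of_le_of_lt (le_max_left _ _) hθ.1, le_trans hθ.2.le hθcIoc.2⟩
    have hJmeas : volume J ≠ 0 := by
      rw [hJ, Real.volume_Ioo]
      have : max 0 (θc - ε2) < θc := max_lt hθcIoc.1 (by linarith)
      simp only [ne_eq, ENNReal.ofReal_eq_zero, not_le]
      linarith
    have hnull : volume.restrict (Set.Ioc 0 (2*Real.pi)) {θ | ¬ gg θ = 0} = 0 := by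
      have := MeasureTheory.ae_iff.mp hae
      simpa using this
    obtain ⟨θ0, hθ0J, hθ0g⟩ : ∃ θ0 ∈ J, gg θ0 = 0 := by
      by_contra hcon
      push_neg at hcon
      have h0 : volume.restrict (Set.Ioc 0 (2*Real.pi)) J = 0 :=
        measure_mono_null (fun θ hθ => hcon θ hθ) hnull
      rw [MeasureTheory.Measure.restrict_apply measurableSet_Ioo,
        Set.inter_eq_self_of_subset_left hJIoc] at h0
      exact hJmeas h0
    have hw0 : circleMap z0 r θ0 ∈ S := by
      refine ⟨ball_subset_closedBall (hcbball (circleMap_mem_closedBall _ hr.le θ0)), ?_⟩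
      have : u (circleMap z0 r θ0) = M := by
        have := hθ0g
        rw [hgg] at this
        dsimp only at this
        linarith
      exact this
    have hcontra := hz0max hw0
    have hmem := hJT hθ0J
    simp only [hT, Set.mem_setOf_eq] at hmem
    exact absurd hmem (not_lt.mpr hcontra)
  have hM1 : M ≤ 1 := by
    rw [← hz0M, ← hgoal z0]
    exact hbd z0 habs1
  rw [hgoal 0]
  exact le_trans (hle 0 (mem_closedBall_self zero_le_one)) hM1
end

section
/- Let 0 < m < 1/2 and 0 < b < 1. The function F(x) = x^{4m-2}(-1-2m+2m²+b^{2m}) + x^{2m}(1+(1-2m)b^{2m}) + x^{2m-2}(1+(2m-1)b^{2m}) - (1-m)²x^{4m} - m²x^{4m-4} - b^{2m} has exactly one zero x₀ in the open interval (0,1). -/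
set_option maxHeartbeats 2000000
open Set
noncomputable def S15 (c e : Fin 6 → ℝ) (x : ℝ) : ℝ := ∑ i, c i * x ^ (e i)
noncomputable def cc15 (m B : ℝ) : Fin 6 → ℝ := fun i => match i with
  | 0 => -1 - 2*m + 2*m^2 + B
  | 1 => 1 + (1-2*m)*B
  | 2 => 1 + (2*m-1)*B
  | 3 => -(1-m)^2
  | 4 => -(m^2)
  | 5 => -B
noncomputable def ee15 (m : ℝ) : Fin 6 → ℝ := fun i => match i with
  | 0 => 4*m-2
  | 1 => 2*m
  | 2 => 2*m-2
  | 3 => 4*m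
  | 4 => 4*m-4
  | 5 => 0
lemma S15_hasDerivAt (c e : Fin 6 → ℝ) {x : ℝ} (hx : 0 < x) :
    HasDerivAt (S15 c e) (S15 (fun i => c i * e i) (fun i => e i - 1) x) x := by
  have h : ∀ i ∈ (Finset.univ : Finset (Fin 6)),
      HasDerivAt (fun y : ℝ => c i * y ^ (e i)) (c i * e i * x ^ (e i - 1)) x := by
    intro i _
    simpa [mul_assoc] using
      (Real.hasDerivAt_rpow_const (x := x) (p := e i) (Or.inl hx.ne')).const_mul (c i)
  show HasDerivAt (fun y => ∑ i, c i * y ^ (e i)) _ x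
  simpa [S15, mul_assoc] using HasDerivAt.fun_sum h
lemma S15_cont (c e : Fin 6 → ℝ) {s : Set ℝ} (hs : ∀ x ∈ s, (0:ℝ) < x) :
    ContinuousOn (S15 c e) s :=
  fun x hx => ((S15_hasDerivAt c e (hs x hx)).continuousAt).continuousWithinAt
lemma S15_one (c e : Fin 6 → ℝ) : S15 c e 1 = ∑ i, c i := by simp [S15]


lemma S15_cascade (c e : Fin 6 → ℝ) (θ : ℝ) {a b : ℝ} (ha : 0 < a) (hab : a < b)
    (hSa : S15 c e a = 0) (hSb : S15 c e b = 0) :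
    ∃ z ∈ Set.Ioo a b, S15 (fun i => c i * (e i - θ)) (fun i => e i - θ - 1) z = 0 := by
  have hb0 : 0 < b := ha.trans hab
  have key : ∀ y : ℝ, 0 < y → S15 c e y = 0 → S15 c (fun i => e i - θ) y = 0 := by
    intro y hy h0
    unfold S15 at h0 ⊢
    have h1 : (∑ i, c i * y ^ (e i - θ)) = (∑ i, c i * y ^ (e i)) / y ^ θ := by
      rw [Finset.sum_div]
      refine Finset.sum_congr rfl fun i _ => ?_
      rw [Real.rpow_sub hy]; ring
    rw [h1, h0, zero_div]
  refine exists_hasDerivAt_eq_zero hab ?_ ((key a ha hSa).trans (key b hb0 hSb).symm) ?_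
  · exact S15_cont c (fun i => e i - θ) (fun x hx => lt_of_lt_of_le ha hx.1)
  · intro x hx
    exact S15_hasDerivAt c (fun i => e i - θ) (ha.trans hx.1)

lemma pos_left15 {f : ℝ → ℝ} {L : ℝ} (hf : HasDerivAt f L 1) (h0 : f 1 = 0) (hL : L < 0) :
    ∃ δ > 0, ∀ z ∈ Set.Ioo (1-δ) 1, 0 < f z := by
  have hs := hasDerivAt_iff_tendsto_slope.mp hf
  have hev : ∀ᶠ z in nhdsWithin (1:ℝ) {(1:ℝ)}ᶜ, slope f 1 z < 0 := hs.eventually_lt_const hL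
  have hev' : ∀ᶠ z in nhdsWithin (1:ℝ) (Set.Iio 1), slope f 1 z < 0 :=
    hev.filter_mono (nhdsWithin_mono 1 (fun z hz => ne_of_lt hz))
  rw [Filter.eventually_iff, mem_nhdsLT_iff_exists_Ioo_subset] at hev'
  obtain ⟨a, ha, hsub⟩ := hev'
  refine ⟨1 - a, by simp at ha; linarith, fun z hz => ?_⟩
  have hz' : z ∈ Set.Ioo a 1 := by constructor <;> [linarith [hz.1]; exact hz.2]
  have hslope : slope f 1 z < 0 := hsub hz'
  rw [slope_def_field] at hslope
  have hz1 : z - 1 < 0 := by linarith [hz'.2]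
  rw [div_neg_iff] at hslope
  rcases hslope with ⟨h1, h2⟩ | ⟨h1, h2⟩
  · linarith
  · rw [h0] at h1; linarith

lemma exist15 (m B : ℝ) (hm0 : 0 < m) (hm1 : m < 1/2) (hB0 : 0 < B) (hB1 : B < 1) :
    ∃ r ∈ Set.Ioo (0:ℝ) 1, S15 (cc15 m B) (ee15 m) r = 0 := by
  have hs0 : S15 (cc15 m B) (ee15 m) 1 = 0 := by
    rw [S15_one, Fin.sum_univ_six]; simp only [cc15, ee15]; ring
  have hs1 : S15 (fun i => cc15 m B i * ee15 m i) (fun i => ee15 m i - 1) 1 = 0 := by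
    rw [S15_one, Fin.sum_univ_six]; simp only [cc15, ee15]; ring
  have hs2 : S15 (fun i => cc15 m B i * ee15 m i * (ee15 m i - 1))
      (fun i => ee15 m i - 1 - 1) 1 = 0 := by
    rw [S15_one, Fin.sum_univ_six]; simp only [cc15, ee15]; ring
  have hL : S15 (fun i => cc15 m B i * ee15 m i * (ee15 m i - 1) * (ee15 m i - 1 - 1))
      (fun i => ee15 m i - 1 - 1 - 1) 1 = -8*m*(1-B)*((1-2*m)*(1-m)) := by
    rw [S15_one, Fin.sum_univ_six]; simp only [cc15, ee15]; ring
  have hLneg : -8*m*(1-B)*((1-2*m)*(1-m)) < 0 := by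
    have h := mul_pos (mul_pos hm0 (by linarith : (0:ℝ) < 1 - B))
      (mul_pos (by linarith : (0:ℝ) < 1-2*m) (by linarith : (0:ℝ) < 1-m))
    nlinarith [h]
  have hder2 : HasDerivAt
      (S15 (fun i => cc15 m B i * ee15 m i * (ee15 m i - 1)) (fun i => ee15 m i - 1 - 1))
      (-8*m*(1-B)*((1-2*m)*(1-m))) 1 := by
    have h := S15_hasDerivAt (fun i => cc15 m B i * ee15 m i * (ee15 m i - 1))
      (fun i => ee15 m i - 1 - 1) one_pos
    rwa [hL] at h
  obtain ⟨δ, hδ0, hδpos⟩ := pos_left15 hder2 hs2 hLneg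
  set σ : ℝ := max (1 - δ) (1/2) with hσdef
  have hσpos : (0:ℝ) < σ := lt_of_lt_of_le (by norm_num) (le_max_right _ _)
  have hσhalf : (1:ℝ)/2 ≤ σ := le_max_right _ _
  have hσlt1 : σ < 1 := max_lt (by linarith) (by norm_num)
  have hmono : StrictMonoOn (S15 (fun i => cc15 m B i * ee15 m i) (fun i => ee15 m i - 1))
      (Set.Icc σ 1) := by
    apply strictMonoOn_of_deriv_pos (convex_Icc σ 1)
      (S15_cont _ _ (fun z hz => lt_of_lt_of_le hσpos hz.1))
    intro z hz
    rw [interior_Icc] at hz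
    have hz0 : 0 < z := hσpos.trans hz.1
    have hd := S15_hasDerivAt (fun i => cc15 m B i * ee15 m i) (fun i => ee15 m i - 1) hz0
    rw [hd.deriv]
    exact hδpos z ⟨by have := le_max_left (1-δ) (1/2); linarith [hz.1], hz.2⟩
  have hF1neg : ∀ z ∈ Set.Ioo σ 1,
      S15 (fun i => cc15 m B i * ee15 m i) (fun i => ee15 m i - 1) z < 0 := by
    intro z hz
    have h := hmono ⟨hz.1.le, hz.2.le⟩ (right_mem_Icc.mpr hσlt1.le) hz.2
    rw [hs1] at h; exact h
  have hanti : StrictAntiOn (S15 (cc15 m B) (ee15 m)) (Set.Icc σ 1) := by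
    apply strictAntiOn_of_deriv_neg (convex_Icc σ 1)
      (S15_cont _ _ (fun z hz => lt_of_lt_of_le hσpos hz.1))
    intro z hz
    rw [interior_Icc] at hz
    have hd := S15_hasDerivAt (cc15 m B) (ee15 m) (hσpos.trans hz.1)
    rw [hd.deriv]
    exact hF1neg z hz
  have hFpos : ∀ z ∈ Set.Ioo σ 1, 0 < S15 (cc15 m B) (ee15 m) z := by
    intro z hz
    have h := hanti ⟨hz.1.le, hz.2.le⟩ (right_mem_Icc.mpr hσlt1.le) hz.2
    rw [hs0] at h; exact h
  -- small point with negative value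
  set x₀ : ℝ := (m^2/5) ^ (((2:ℝ) - 2*m)⁻¹) with hx₀def
  have hbasepos : (0:ℝ) < m^2/5 := by positivity
  have hx₀pos : 0 < x₀ := Real.rpow_pos_of_pos hbasepos _
  have hpow : x₀ ^ ((2:ℝ) - 2*m) = m^2/5 := Real.rpow_inv_rpow hbasepos.le (by linarith)
  have hx₀half : x₀ < 1/2 := by
    have hexp : (1:ℝ)/2 ≤ ((2:ℝ) - 2*m)⁻¹ := by
      rw [show (1:ℝ)/2 = (2:ℝ)⁻¹ by norm_num]
      exact inv_anti₀ (by linarith) (by linarith)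
    have h1 : x₀ ≤ (m^2/5) ^ ((1:ℝ)/2) :=
      Real.rpow_le_rpow_of_exponent_ge hbasepos (by nlinarith) hexp
    have h2 : (m^2/5 : ℝ) ^ ((1:ℝ)/2) < (1/4 : ℝ) ^ ((1:ℝ)/2) :=
      Real.rpow_lt_rpow hbasepos.le (by nlinarith) (by norm_num)
    have h3 : ((1:ℝ)/4) ^ ((1:ℝ)/2) = 1/2 := by
      rw [show (1/4:ℝ) = (1/2)^(2:ℕ) by norm_num, ← Real.rpow_natCast (1/2:ℝ) 2,
        ← Real.rpow_mul (by norm_num : (0:ℝ) ≤ 1/2)]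
      norm_num
    linarith
  have hx₀lt1 : x₀ < 1 := by linarith
  have ht : x₀ ^ ((2:ℝ)*m - 2) = 5/m^2 := by
    rw [show (2*m-2:ℝ) = -((2:ℝ) - 2*m) by ring, Real.rpow_neg hx₀pos.le, hpow, inv_div]
  have ht4 : x₀ ^ ((4:ℝ)*m - 4) = (5/m^2)^(2:ℕ) := by
    rw [show (4*m-4:ℝ) = (2*m-2)*((2:ℕ):ℝ) by push_cast; ring,
      Real.rpow_mul hx₀pos.le, Real.rpow_natCast, ht]
  have hFx₀ : S15 (cc15 m B) (ee15 m) x₀ < 0 := by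
    unfold S15; rw [Fin.sum_univ_six]; simp only [cc15, ee15]
    rw [ht, ht4, Real.rpow_zero]
    have p1 : 0 < x₀ ^ ((4:ℝ)*m-2) := Real.rpow_pos_of_pos hx₀pos _
    have p2 : x₀ ^ ((2:ℝ)*m) ≤ 1 := Real.rpow_le_one hx₀pos.le hx₀lt1.le (by linarith)
    have p3 : 0 < x₀ ^ ((4:ℝ)*m) := Real.rpow_pos_of_pos hx₀pos _
    have hm2 : 0 < m^2 := by positivity
    have key : (20:ℝ) ≤ 5/m^2 := by rw [le_div_iff₀ hm2]; nlinarith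
    have c0neg : -1-2*m+2*m^2+B < 0 := by nlinarith
    have t0 : (-1-2*m+2*m^2+B) * x₀ ^ (4*m-2) < 0 := mul_neg_of_neg_of_pos c0neg p1
    have c1pos : (0:ℝ) < 1+(1-2*m)*B := by nlinarith
    have t1 : (1+(1-2*m)*B) * x₀ ^ (2*m) ≤ 1+(1-2*m)*B := by
      have h := mul_le_mul_of_nonneg_left p2 c1pos.le
      rwa [mul_one] at h
    have c1b : 1 + (1-2*m)*B < 2 := by nlinarith
    have c2b : 1 + (2*m-1)*B ≤ 1 := by nlinarith
    have t2 : (1+(2*m-1)*B) * (5/m^2) ≤ 5/m^2 :=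
      mul_le_of_le_one_left (by positivity) c2b
    have t3 : -(1-m)^2 * x₀ ^ (4*m) ≤ 0 := by nlinarith [p3, sq_nonneg (1-m)]
    have e4 : -m^2 * (5/m^2)^(2:ℕ) = -(5*(5/m^2)) := by
      field_simp
    nlinarith [t0, t1, t2, t3, e4, key, hB0, c1b]
  -- IVT
  set x₁ : ℝ := (σ+1)/2 with hx₁def
  have hx₁mem : x₁ ∈ Set.Ioo σ 1 := ⟨by linarith, by linarith⟩
  have hFx₁ : 0 < S15 (cc15 m B) (ee15 m) x₁ := hFpos x₁ hx₁mem
  have hx₀x₁ : x₀ < x₁ := by linarith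
  have hivt := intermediate_value_Ioo hx₀x₁.le
    (S15_cont (cc15 m B) (ee15 m) (fun z hz => lt_of_lt_of_le hx₀pos hz.1))
  obtain ⟨r, hr, hr0⟩ := hivt ⟨hFx₀, hFx₁⟩
  exact ⟨r, ⟨hx₀pos.trans hr.1, hr.2.trans (by linarith [hx₁mem.2])⟩, hr0⟩

lemma no_two15 (m B : ℝ) (hm0 : 0 < m) (hm1 : m < 1/2) (hB0 : 0 < B) (hB1 : B < 1)
    {x y : ℝ} (hx : x ∈ Set.Ioo (0:ℝ) 1) (hy : y ∈ Set.Ioo (0:ℝ) 1) (hxy : x < y)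
    (hSx : S15 (cc15 m B) (ee15 m) x = 0) (hSy : S15 (cc15 m B) (ee15 m) y = 0) : False := by
  have hS1 : S15 (cc15 m B) (ee15 m) 1 = 0 := by
    rw [S15_one, Fin.sum_univ_six]; simp only [cc15, ee15]; ring
  obtain ⟨z₁, hz₁, hSz₁⟩ := S15_cascade (cc15 m B) (ee15 m) (3*m-3) hx.1 hxy hSx hSy
  obtain ⟨z₂, hz₂, hSz₂⟩ := S15_cascade (cc15 m B) (ee15 m) (3*m-3) hy.1 hy.2 hSy hS1
  have hS1_1 : S15 (fun i => cc15 m B i * (ee15 m i - (3*m-3)))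
      (fun i => ee15 m i - (3*m-3) - 1) 1 = 0 := by
    rw [S15_one, Fin.sum_univ_six]; simp only [cc15, ee15]; ring
  obtain ⟨w₁, hw₁, hSw₁⟩ := S15_cascade _ _ 0 (hx.1.trans hz₁.1) (hz₁.2.trans hz₂.1) hSz₁ hSz₂
  obtain ⟨w₂, hw₂, hSw₂⟩ := S15_cascade _ _ 0 (hy.1.trans hz₂.1) hz₂.2 hSz₂ hS1_1
  have hS2_1 : S15 (fun i => (fun i => cc15 m B i * (ee15 m i - (3*m-3))) i *
        ((fun i => ee15 m i - (3*m-3) - 1) i - 0))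
      (fun i => (fun i => ee15 m i - (3*m-3) - 1) i - 0 - 1) 1 = 0 := by
    rw [S15_one, Fin.sum_univ_six]; simp only [cc15, ee15]; ring
  have hw₁0 : 0 < w₁ := (hx.1.trans hz₁.1).trans hw₁.1
  have hw₂0 : 0 < w₂ := (hy.1.trans hz₂.1).trans hw₂.1
  obtain ⟨u₁, hu₁, hSu₁⟩ := S15_cascade _ _ (1-2*m) hw₁0 (hw₁.2.trans hw₂.1) hSw₁ hSw₂
  obtain ⟨u₂, hu₂, hSu₂⟩ := S15_cascade _ _ (1-2*m) hw₂0 hw₂.2 hSw₂ hS2_1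
  obtain ⟨v, hv, hSv⟩ := S15_cascade _ _ (2*m-1) (hw₁0.trans hu₁.1) (hu₁.2.trans hu₂.1) hSu₁ hSu₂
  have hv0 : 0 < v := (hw₁0.trans hu₁.1).trans hv.1
  -- final: the resulting sum is strictly negative at v
  revert hSv
  unfold S15
  rw [Fin.sum_univ_six]
  simp only [cc15, ee15]
  intro hSv
  have P : ∀ q : ℝ, 0 < v ^ q := fun q => Real.rpow_pos_of_pos hv0 q
  have hc0 : ((-1 - 2 * m + 2 * m ^ 2 + B) * (4 * m - 2 - (3 * m - 3)) * (4 * m - 2 - (3 * m - 3) - 1 - 0) * (4 * m - 2 - (3 * m - 3) - 1 - 0 - 1 - (1 - 2 * m)) * (4 * m - 2 - (3 * m - 3) - 1 - 0 - 1 - (1 - 2 * m) - 1 - (2 * m - 1)) : ℝ) < 0 := by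
    have q0 : ((-1 - 2 * m + 2 * m ^ 2 + B) : ℝ) < 0 := by nlinarith
    have q1 := mul_neg_of_neg_of_pos q0 (by linarith : (4 * m - 2 - (3 * m - 3) : ℝ) > 0)
    have q2 := mul_neg_of_neg_of_pos q1 (by linarith : (4 * m - 2 - (3 * m - 3) - 1 - 0 : ℝ) > 0)
    have q3 := mul_pos_of_neg_of_neg q2 (by linarith : (4 * m - 2 - (3 * m - 3) - 1 - 0 - 1 - (1 - 2 * m) : ℝ) < 0)
    exact mul_neg_of_pos_of_neg q3 (by linarith : (4 * m - 2 - (3 * m - 3) - 1 - 0 - 1 - (1 - 2 * m) - 1 - (2 * m - 1) : ℝ) < 0)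
  have ht0 := mul_neg_of_neg_of_pos hc0 (P (4 * m - 2 - (3 * m - 3) - 1 - 0 - 1 - (1 - 2 * m) - 1 - (2 * m - 1) - 1))
  have hc1 : ((1 + (1 - 2 * m) * B) * (2 * m - (3 * m - 3)) * (2 * m - (3 * m - 3) - 1 - 0) * (2 * m - (3 * m - 3) - 1 - 0 - 1 - (1 - 2 * m)) * (2 * m - (3 * m - 3) - 1 - 0 - 1 - (1 - 2 * m) - 1 - (2 * m - 1)) : ℝ) < 0 := by
    have q0 : ((1 + (1 - 2 * m) * B) : ℝ) > 0 := by nlinarith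
    have q1 := mul_pos q0 (by linarith : (2 * m - (3 * m - 3) : ℝ) > 0)
    have q2 := mul_pos q1 (by linarith : (2 * m - (3 * m - 3) - 1 - 0 : ℝ) > 0)
    have q3 := mul_pos q2 (by linarith : (2 * m - (3 * m - 3) - 1 - 0 - 1 - (1 - 2 * m) : ℝ) > 0)
    exact mul_neg_of_pos_of_neg q3 (by linarith : (2 * m - (3 * m - 3) - 1 - 0 - 1 - (1 - 2 * m) - 1 - (2 * m - 1) : ℝ) < 0)
  have ht1 := mul_neg_of_neg_of_pos hc1 (P (2 * m - (3 * m - 3) - 1 - 0 - 1 - (1 - 2 * m) - 1 - (2 * m - 1) - 1))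
  have hc2 : ((1 + (2 * m - 1) * B) * (2 * m - 2 - (3 * m - 3)) * (2 * m - 2 - (3 * m - 3) - 1 - 0) * (2 * m - 2 - (3 * m - 3) - 1 - 0 - 1 - (1 - 2 * m)) * (2 * m - 2 - (3 * m - 3) - 1 - 0 - 1 - (1 - 2 * m) - 1 - (2 * m - 1)) : ℝ) < 0 := by
    have q0 : ((1 + (2 * m - 1) * B) : ℝ) > 0 := by nlinarith
    have q1 := mul_pos q0 (by linarith : (2 * m - 2 - (3 * m - 3) : ℝ) > 0)
    have q2 := mul_neg_of_pos_of_neg q1 (by linarith : (2 * m - 2 - (3 * m - 3) - 1 - 0 : ℝ) < 0)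
    have q3 := mul_pos_of_neg_of_neg q2 (by linarith : (2 * m - 2 - (3 * m - 3) - 1 - 0 - 1 - (1 - 2 * m) : ℝ) < 0)
    exact mul_neg_of_pos_of_neg q3 (by linarith : (2 * m - 2 - (3 * m - 3) - 1 - 0 - 1 - (1 - 2 * m) - 1 - (2 * m - 1) : ℝ) < 0)
  have ht2 := mul_neg_of_neg_of_pos hc2 (P (2 * m - 2 - (3 * m - 3) - 1 - 0 - 1 - (1 - 2 * m) - 1 - (2 * m - 1) - 1))
  have hc3 : (-(1 - m) ^ 2 * (4 * m - (3 * m - 3)) * (4 * m - (3 * m - 3) - 1 - 0) * (4 * m - (3 * m - 3) - 1 - 0 - 1 - (1 - 2 * m)) * (4 * m - (3 * m - 3) - 1 - 0 - 1 - (1 - 2 * m) - 1 - (2 * m - 1)) : ℝ) < 0 := by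
    have q0 : (-(1 - m) ^ 2 : ℝ) < 0 := by nlinarith
    have q1 := mul_neg_of_neg_of_pos q0 (by linarith : (4 * m - (3 * m - 3) : ℝ) > 0)
    have q2 := mul_neg_of_neg_of_pos q1 (by linarith : (4 * m - (3 * m - 3) - 1 - 0 : ℝ) > 0)
    have q3 := mul_neg_of_neg_of_pos q2 (by linarith : (4 * m - (3 * m - 3) - 1 - 0 - 1 - (1 - 2 * m) : ℝ) > 0)
    exact mul_neg_of_neg_of_pos q3 (by linarith : (4 * m - (3 * m - 3) - 1 - 0 - 1 - (1 - 2 * m) - 1 - (2 * m - 1) : ℝ) > 0)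
  have ht3 := mul_neg_of_neg_of_pos hc3 (P (4 * m - (3 * m - 3) - 1 - 0 - 1 - (1 - 2 * m) - 1 - (2 * m - 1) - 1))
  have hc4 : (-m ^ 2 * (4 * m - 4 - (3 * m - 3)) * (4 * m - 4 - (3 * m - 3) - 1 - 0) * (4 * m - 4 - (3 * m - 3) - 1 - 0 - 1 - (1 - 2 * m)) * (4 * m - 4 - (3 * m - 3) - 1 - 0 - 1 - (1 - 2 * m) - 1 - (2 * m - 1)) : ℝ) < 0 := by
    have q0 : (-m ^ 2 : ℝ) < 0 := by nlinarith
    have q1 := mul_pos_of_neg_of_neg q0 (by linarith : (4 * m - 4 - (3 * m - 3) : ℝ) < 0)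
    have q2 := mul_neg_of_pos_of_neg q1 (by linarith : (4 * m - 4 - (3 * m - 3) - 1 - 0 : ℝ) < 0)
    have q3 := mul_pos_of_neg_of_neg q2 (by linarith : (4 * m - 4 - (3 * m - 3) - 1 - 0 - 1 - (1 - 2 * m) : ℝ) < 0)
    exact mul_neg_of_pos_of_neg q3 (by linarith : (4 * m - 4 - (3 * m - 3) - 1 - 0 - 1 - (1 - 2 * m) - 1 - (2 * m - 1) : ℝ) < 0)
  have ht4 := mul_neg_of_neg_of_pos hc4 (P (4 * m - 4 - (3 * m - 3) - 1 - 0 - 1 - (1 - 2 * m) - 1 - (2 * m - 1) - 1))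
  have hc5 : (-B * (0 - (3 * m - 3)) * (0 - (3 * m - 3) - 1 - 0) * (0 - (3 * m - 3) - 1 - 0 - 1 - (1 - 2 * m)) * (0 - (3 * m - 3) - 1 - 0 - 1 - (1 - 2 * m) - 1 - (2 * m - 1)) : ℝ) < 0 := by
    have q0 : (-B : ℝ) < 0 := by linarith
    have q1 := mul_neg_of_neg_of_pos q0 (by linarith : (0 - (3 * m - 3) : ℝ) > 0)
    have q2 := mul_neg_of_neg_of_pos q1 (by linarith : (0 - (3 * m - 3) - 1 - 0 : ℝ) > 0)
    have q3 := mul_pos_of_neg_of_neg q2 (by linarith : (0 - (3 * m - 3) - 1 - 0 - 1 - (1 - 2 * m) : ℝ) < 0)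
    exact mul_neg_of_pos_of_neg q3 (by linarith : (0 - (3 * m - 3) - 1 - 0 - 1 - (1 - 2 * m) - 1 - (2 * m - 1) : ℝ) < 0)
  have ht5 := mul_neg_of_neg_of_pos hc5 (P (0 - (3 * m - 3) - 1 - 0 - 1 - (1 - 2 * m) - 1 - (2 * m - 1) - 1))
  linarith [hSv, ht0, ht1, ht2, ht3, ht4, ht5]


theorem stmt15 (m b : ℝ) (hm0 : 0 < m) (hm1 : m < 1/2) (hb0 : 0 < b) (hb1 : b < 1) :
    ∃! x : ℝ, x ∈ Set.Ioo (0 : ℝ) 1 ∧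
      x ^ (4 * m - 2) * (-1 - 2 * m + 2 * m ^ 2 + b ^ (2 * m)) +
        x ^ (2 * m) * (1 + (1 - 2 * m) * b ^ (2 * m)) +
        x ^ (2 * m - 2) * (1 + (2 * m - 1) * b ^ (2 * m)) -
        (1 - m) ^ 2 * x ^ (4 * m) - m ^ 2 * x ^ (4 * m - 4) - b ^ (2 * m) = 0 := by
  have hB0 : 0 < b ^ (2*m) := Real.rpow_pos_of_pos hb0 _
  have hB1 : b ^ (2*m) < 1 := Real.rpow_lt_one hb0.le hb1 (by linarith)
  have hSeq : ∀ x : ℝ, S15 (cc15 m (b ^ (2*m))) (ee15 m) x =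
      x ^ (4 * m - 2) * (-1 - 2 * m + 2 * m ^ 2 + b ^ (2 * m)) +
        x ^ (2 * m) * (1 + (1 - 2 * m) * b ^ (2 * m)) +
        x ^ (2 * m - 2) * (1 + (2 * m - 1) * b ^ (2 * m)) -
        (1 - m) ^ 2 * x ^ (4 * m) - m ^ 2 * x ^ (4 * m - 4) - b ^ (2 * m) := by
    intro x
    unfold S15
    rw [Fin.sum_univ_six]
    simp only [cc15, ee15, Real.rpow_zero]
    ring
  obtain ⟨r, hrmem, hr0⟩ := exist15 m (b ^ (2*m)) hm0 hm1 hB0 hB1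
  refine ⟨r, ⟨hrmem, by rw [← hSeq r]; exact hr0⟩, ?_⟩
  rintro y ⟨hymem, hy0⟩
  have hy' : S15 (cc15 m (b ^ (2*m))) (ee15 m) y = 0 := by rw [hSeq y]; exact hy0
  by_contra hne
  rcases lt_or_gt_of_ne hne with h | h
  · exact no_two15 m (b ^ (2*m)) hm0 hm1 hB0 hB1 hymem hrmem h hy' hr0
  · exact no_two15 m (b ^ (2*m)) hm0 hm1 hB0 hB1 hrmem hymem h hr0 hy'
end

section
/- Let 0 < m < 1/2, 0 < b < 1, and v > 0. There exists x ∈ (0,1) with x^{2m-1} > b^{2m} satisfying v·((m-1)x^{2m} - m·x^{2m-2} + b^{2m})² = x^{4m-2} - b^{2m}x^{2m} - b^{2m}x^{2m-2} + b^{4m} if and only if v ≤ 1/(4m(1-m)). -/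
set_option maxHeartbeats 1000000


theorem stmt19 (m b v : ℝ) (hm0 : 0 < m) (hm1 : m < 1/2)
    (hb0 : 0 < b) (hb1 : b < 1) (hv : 0 < v) :
    (∃ x ∈ Set.Ioo (0 : ℝ) 1, x ^ (2 * m - 1) > b ^ (2 * m) ∧
        v * ((m - 1) * x ^ (2 * m) - m * x ^ (2 * m - 2) + b ^ (2 * m)) ^ 2 =
          x ^ (4 * m - 2) - b ^ (2 * m) * x ^ (2 * m) - b ^ (2 * m) * x ^ (2 * m - 2) +
            b ^ (4 * m)) ↔
      v ≤ 1 / (4 * m * (1 - m)) := by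
  have hm1' : m < 1 := by linarith
  have hc0 : (0:ℝ) < b ^ (2 * m) := Real.rpow_pos_of_pos hb0 _
  have hc1 : b ^ (2 * m) < 1 := Real.rpow_lt_one hb0.le hb1 (by linarith)
  have hb4 : b ^ (4 * m) = b ^ (2 * m) * b ^ (2 * m) := by
    rw [show (4:ℝ) * m = 2 * m + 2 * m by ring, Real.rpow_add hb0]
  constructor
  · rintro ⟨x, ⟨hx0, hx1⟩, hgt, heq⟩
    have hx4 : x ^ (4 * m - 2) = x ^ (2 * m) * x ^ (2 * m - 2) := by
      rw [show 4 * m - 2 = 2 * m + (2 * m - 2) by ring, Real.rpow_add hx0]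
    set c := b ^ (2 * m) with hc
    set P := x ^ (2 * m) with hP
    set Q := x ^ (2 * m - 2) with hQ
    have hQgt : x ^ (2 * m - 1) < Q :=
      Real.rpow_lt_rpow_of_exponent_gt hx0 hx1 (by linarith)
    have hB : 0 < Q - c := by nlinarith
    have heq' : v * ((m - 1) * P - m * Q + c) ^ 2 = (P - c) * (Q - c) := by
      rw [heq, hx4, hb4]; ring
    have hA : 0 ≤ P - c := by
      nlinarith [mul_nonneg hv.le (sq_nonneg ((m - 1) * P - m * Q + c)), hB]
    have hDpos : 0 < (1 - m) * (P - c) + m * (Q - c) := by nlinarith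
    have hSpos : 0 < ((m - 1) * P - m * Q + c) ^ 2 := by
      have : ((m - 1) * P - m * Q + c) ^ 2 = ((1 - m) * (P - c) + m * (Q - c)) ^ 2 := by ring
      rw [this]; positivity
    have key : 4 * m * (1 - m) * (v * ((m - 1) * P - m * Q + c) ^ 2)
        = 4 * m * (1 - m) * ((P - c) * (Q - c)) := by rw [heq']
    rw [le_div_iff₀ (by nlinarith)]
    have h3 : v * (4 * m * (1 - m)) * ((m - 1) * P - m * Q + c) ^ 2
        ≤ 1 * ((m - 1) * P - m * Q + c) ^ 2 := by
      have hAM : ((m - 1) * P - m * Q + c) ^ 2 - 4 * m * (1 - m) * ((P - c) * (Q - c))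
          = ((1 - m) * (P - c) - m * (Q - c)) ^ 2 := by ring
      have h4 : v * (4 * m * (1 - m)) * ((m - 1) * P - m * Q + c) ^ 2
          = 4 * m * (1 - m) * ((P - c) * (Q - c)) := by
        linear_combination (4 * m * (1 - m)) * heq'
      rw [h4, one_mul]
      nlinarith [sq_nonneg ((1 - m) * (P - c) - m * (Q - c))]
    exact le_of_mul_le_mul_right h3 hSpos
  · intro hvle
    set c := b ^ (2 * m) with hc
    have h1m : (0:ℝ) < 1 - m := by linarith
    have hv4 : v * (4 * m * (1 - m)) ≤ 1 := by
      rw [le_div_iff₀ (show (0:ℝ) < 4 * m * (1 - m) by nlinarith)] at hvle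
      exact hvle
    have hcont1 : ContinuousOn (fun x : ℝ => x ^ (2 * m)) (Set.Icc b 1) := fun x hx =>
      (Real.continuousAt_rpow_const x (2 * m)
        (Or.inl (ne_of_gt (lt_of_lt_of_le hb0 hx.1)))).continuousWithinAt
    have hcont2 : ContinuousOn (fun x : ℝ => x ^ (2 * m - 2)) (Set.Icc b 1) := fun x hx =>
      (Real.continuousAt_rpow_const x (2 * m - 2)
        (Or.inl (ne_of_gt (lt_of_lt_of_le hb0 hx.1)))).continuousWithinAt
    set h : ℝ → ℝ := fun x => (1 - m) * x ^ (2 * m) - m * x ^ (2 * m - 2) - (1 - 2 * m) * c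
      with hhdef
    have hconth : ContinuousOn h (Set.Icc b 1) :=
      ((continuousOn_const.mul hcont1).sub (continuousOn_const.mul hcont2)).sub continuousOn_const
    have hb22 : b ^ (2 * m) < b ^ (2 * m - 2) :=
      Real.rpow_lt_rpow_of_exponent_gt hb0 hb1 (by linarith)
    rw [← hc] at hb22
    have hhb : h b < 0 := by
      simp only [hhdef, hc]
      nlinarith
    have hh1 : 0 < h 1 := by
      simp only [hhdef, Real.one_rpow]
      nlinarith
    obtain ⟨y, hy, hyval⟩ := intermediate_value_Ioo hb1.le hconth
      (Set.mem_Ioo.mpr ⟨hhb, hh1⟩)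
    have hy0 : 0 < y := hb0.trans hy.1
    have hQy1 : 1 < y ^ (2 * m - 2) :=
      (Real.one_lt_rpow_iff_of_pos hy0).mpr (Or.inr ⟨hy.2, by linarith⟩)
    have hBy : 0 < y ^ (2 * m - 2) - c := by linarith
    have hrel : (1 - m) * (y ^ (2 * m) - c) = m * (y ^ (2 * m - 2) - c) := by
      simp only [hhdef] at hyval
      linarith [hyval]
    set F : ℝ → ℝ := fun x => x ^ (2 * m) * x ^ (2 * m - 2) - c * x ^ (2 * m)
        - c * x ^ (2 * m - 2) + c ^ 2
        - v * ((m - 1) * x ^ (2 * m) - m * x ^ (2 * m - 2) + c) ^ 2 with hFdef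
    have hcontF : ContinuousOn F (Set.Icc b 1) := by
      apply ContinuousOn.sub
      · exact ((((hcont1.mul hcont2).sub (continuousOn_const.mul hcont1)).sub
          (continuousOn_const.mul hcont2)).add continuousOn_const)
      · exact continuousOn_const.mul
          ((((continuousOn_const.mul hcont1).sub (continuousOn_const.mul hcont2)).add
            continuousOn_const).pow 2)
    have hFb : F b < 0 := by
      simp only [hFdef]
      have hEb : b ^ (2 * m) * b ^ (2 * m - 2) - c * b ^ (2 * m) - c * b ^ (2 * m - 2) + c ^ 2
          - v * ((m - 1) * b ^ (2 * m) - m * b ^ (2 * m - 2) + c) ^ 2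
          = -(v * (m * (b ^ (2 * m - 2) - c)) ^ 2) := by rw [hc]; ring
      rw [hEb]
      have : 0 < v * (m * (b ^ (2 * m - 2) - c)) ^ 2 := by
        have hnz : 0 < b ^ (2 * m - 2) - c := by linarith
        positivity
      linarith
    have hFy : 0 ≤ F y := by
      simp only [hFdef]
      have h2mB : (m - 1) * y ^ (2 * m) - m * y ^ (2 * m - 2) + c
          = -(2 * m * (y ^ (2 * m - 2) - c)) := by linear_combination -hrel
      rw [h2mB]
      have h5 : (1 - m) * (y ^ (2 * m) * y ^ (2 * m - 2) - c * y ^ (2 * m)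
            - c * y ^ (2 * m - 2) + c ^ 2 - v * (-(2 * m * (y ^ (2 * m - 2) - c))) ^ 2)
          = m * (y ^ (2 * m - 2) - c) ^ 2 * (1 - v * (4 * m * (1 - m))) := by
        linear_combination (y ^ (2 * m - 2) - c) * hrel
      have key2 : 0 ≤ m * (y ^ (2 * m - 2) - c) ^ 2 * (1 - v * (4 * m * (1 - m))) :=
        mul_nonneg (mul_nonneg hm0.le (sq_nonneg _)) (by linarith)
      nlinarith [h5, key2, h1m]
    obtain ⟨x, hx, hFx⟩ := intermediate_value_Ioc hy.1.le
      (hcontF.mono (Set.Icc_subset_Icc_right hy.2.le)) (Set.mem_Ioc.mpr ⟨hFb, hFy⟩)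
    have hx0 : 0 < x := hb0.trans hx.1
    have hx1 : x < 1 := lt_of_le_of_lt hx.2 hy.2
    have hx4 : x ^ (4 * m - 2) = x ^ (2 * m) * x ^ (2 * m - 2) := by
      rw [show 4 * m - 2 = 2 * m + (2 * m - 2) by ring, Real.rpow_add hx0]
    refine ⟨x, ⟨hx0, hx1⟩, ?_, ?_⟩
    · have h1 : x ^ (2 * m) < x ^ (2 * m - 1) :=
        Real.rpow_lt_rpow_of_exponent_gt hx0 hx1 (by linarith)
      have h2 : c ≤ x ^ (2 * m) := by
        rw [hc]; exact Real.rpow_le_rpow hb0.le hx.1.le (by linarith)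
      linarith
    · simp only [hFdef] at hFx
      rw [hx4, hb4]
      linear_combination -hFx
end
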